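/- arXiv:2002.01393 — 8 statements merged into one kernel-verified Lean document; each statement's English description precedes it below -/
import Mathlib

section
/- (Turán's inequality for ultraspherical polynomials.) Let λ > −1/2 and let n ≥ 1 be an integer. Then Δ_{n,λ}(x) ≥ 0 for every x ∈ [−1, 1], and Δ_{n,λ}(x) > 0 for every x ∈ (−1, 1). -/
set_option maxHeartbeats 1600000

private lemma quad_nonneg_aux (DC Q N : ℝ) (h : 4*DC*Q = N) (hDC : 0 < DC) (hN : 0 ≤ N) :
    0 ≤ Q := by nlinarith

private lemma quad_pos_aux (DC Q N : ℝ) (h : 4*DC*Q = N) (hDC : 0 < DC) (hN : 0 < N) :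
    0 < Q := by nlinarith

private lemma div_nonneg_aux (D F R : ℝ) (h : D*F = R) (hD : 0 < D) (hR : 0 ≤ R) :
    0 ≤ F := by nlinarith

private lemma div_pos_aux (D F R : ℝ) (h : D*F = R) (hD : 0 < D) (hR : 0 < R) :
    0 < F := by nlinarith

/-- The key one-step (two-index) inequality for the Turán determinant of
ultraspherical polynomials, stated for real numbers satisfying the recurrences. -/
private lemma turan_step (l x c d e f g v : ℝ) (hv : 2 ≤ v) (hl : -(1/2 : ℝ) < l)
    (hx : x ^ 2 ≤ 1)
    (R1 : (v - 1 + 2*l) * e = 2*(v - 1 + l)*x*d - (v - 1)*c)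
    (R2 : (v + 2*l) * f = 2*(v + l)*x*e - v*d)
    (R3 : (v + 1 + 2*l) * g = 2*(v + 1 + l)*x*f - (v + 1)*e)
    (hprev : 0 ≤ d^2 - c*e) :
    0 ≤ f^2 - e*g ∧ (x^2 < 1 → (c ≠ 0 ∨ d ≠ 0) → 0 < f^2 - e*g) := by
  have h1 : (0:ℝ) < v - 1 + 2*l := by linarith
  have h2 : (0:ℝ) < v + 2*l := by linarith
  have h3 : (0:ℝ) < v + 1 + 2*l := by linarith
  have h4 : (0:ℝ) < v + l := by linarith
  have h5 : (0:ℝ) < v - 1 := by linarith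
  have key : ((v+1+2*l)*(v+2*l)^2*(v-1+2*l)^2) * (f^2 - e*g)
      = (v*(v-1)*(v-1+2*l)^2*(v+2*l)) * (d^2 - c*e)
        + (((v+l)*(2*v*(v-1)^2 + 8*(1-x^2)*l*(v^2*(2*x^2+1) + v*(l-1)*(4*x^2+1) + 2*x^2*(l-1)^2)))*d^2
           + (4*x*(v-1)*(v+l)*(4*l*(x^2-1)*(v+l-1) - v*(v-1)))*d*c
           + (2*(v-1)^2*(v+l)*(v+2*l-2*l*x^2))*c^2) := by
    linear_combination
      ((-4)*l^2*e + 4*l^2*c + (-8)*l^2*x*d + 4*l^2*x^2*e + (-4)*l^2*x^2*c + 8*l^2*x^3*d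
        + 8*l^3*e + 8*l^3*x*d + (-8)*l^3*x^2*e + (-8)*l^3*x^3*d + (-4)*v*l*e + 6*v*l*c
        + (-8)*v*l*x*d + 4*v*l*x^2*e + (-4)*v*l*x^2*c + 8*v*l*x^3*d + 8*v*l^2*e
        + (-4)*v*l^2*c + 12*v*l^2*x*d + (-12)*v*l^2*x^2*e + 4*v*l^2*x^2*c
        + (-16)*v*l^2*x^3*d + 8*v*l^3*e + (-1)*v^2*e + 2*v^2*c + 2*v^2*l*e + (-6)*v^2*l*c
        + 4*v^2*l*x*d + (-4)*v^2*l*x^2*e + 4*v^2*l*x^2*c + (-8)*v^2*l*x^3*d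
        + 12*v^2*l^2*e + (-2)*v^3*c + 6*v^3*l*e + v^4*e) * R1
      + (2*l*f + (-2)*l*x*e + (-4)*l^2*f + 8*l^2*x*e + (-8)*l^3*f + (-8)*l^3*x*e
        + 16*l^4*f + v*f + (-1)*v*d + (-4)*v*l*f + 2*v*l*d + 4*v*l*x*e + (-12)*v*l^2*f
        + 4*v*l^2*d + (-8)*v*l^2*x*e + 32*v*l^3*f + (-8)*v*l^3*d + (-1)*v^2*f + v^2*d
        + (-6)*v^2*l*f + 4*v^2*l*d + (-2)*v^2*l*x*e + 24*v^2*l^2*f + (-12)*v^2*l^2*d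
        + (-1)*v^3*f + v^3*d + 8*v^3*l*f + (-6)*v^3*l*d + v^4*f + (-1)*v^4*d) * R2
      + ((-4)*l^2*e + 16*l^3*e + (-16)*l^4*e + (-4)*v*l*e + 24*v*l^2*e + (-32)*v*l^3*e
        + (-1)*v^2*e + 12*v^2*l*e + (-24)*v^2*l^2*e + 2*v^3*e + (-8)*v^3*l*e
        + (-1)*v^4*e) * R3
  have hDC0 : (0:ℝ) < v + 2*l - 2*l*x^2 := by
    rcases le_or_gt 0 l with h | h
    · nlinarith
    · nlinarith
  have hDC : (0:ℝ) < 2*(v-1)^2*(v+l)*(v+2*l-2*l*x^2) := by positivity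
  have sq : 4*(2*(v-1)^2*(v+l)*(v+2*l-2*l*x^2)) *
      (((v+l)*(2*v*(v-1)^2 + 8*(1-x^2)*l*(v^2*(2*x^2+1) + v*(l-1)*(4*x^2+1) + 2*x^2*(l-1)^2)))*d^2
        + (4*x*(v-1)*(v+l)*(4*l*(x^2-1)*(v+l-1) - v*(v-1)))*d*c
        + (2*(v-1)^2*(v+l)*(v+2*l-2*l*x^2))*c^2)
      = (2*(2*(v-1)^2*(v+l)*(v+2*l-2*l*x^2))*c + (4*x*(v-1)*(v+l)*(4*l*(x^2-1)*(v+l-1) - v*(v-1)))*d)^2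
        + (1-x^2)*(16*v*(v-1)^2*(v+2*l)*(v-1+2*l)^2*(v+l)^2)*d^2 := by
    ring
  have hx1 : (0:ℝ) ≤ 1 - x^2 := by linarith
  have hSx : (0:ℝ) ≤ (1-x^2)*(16*v*(v-1)^2*(v+2*l)*(v-1+2*l)^2*(v+l)^2)*d^2 := by positivity
  have hQ : (0:ℝ) ≤
      ((v+l)*(2*v*(v-1)^2 + 8*(1-x^2)*l*(v^2*(2*x^2+1) + v*(l-1)*(4*x^2+1) + 2*x^2*(l-1)^2)))*d^2
        + (4*x*(v-1)*(v+l)*(4*l*(x^2-1)*(v+l-1) - v*(v-1)))*d*c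
        + (2*(v-1)^2*(v+l)*(v+2*l-2*l*x^2))*c^2 :=
    quad_nonneg_aux _ _ _ sq hDC
      (add_nonneg (sq_nonneg _) hSx)
  have hT : (0:ℝ) ≤ (v*(v-1)*(v-1+2*l)^2*(v+2*l)) * (d^2 - c*e) := by
    have hT0 : (0:ℝ) ≤ v*(v-1)*(v-1+2*l)^2*(v+2*l) := by positivity
    exact mul_nonneg hT0 hprev
  have hD : (0:ℝ) < (v+1+2*l)*(v+2*l)^2*(v-1+2*l)^2 := by positivity
  constructor
  · exact div_nonneg_aux _ _ _ key hD (by linarith)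
  · intro hx2 hcd
    have hQ' : (0:ℝ) <
        ((v+l)*(2*v*(v-1)^2 + 8*(1-x^2)*l*(v^2*(2*x^2+1) + v*(l-1)*(4*x^2+1) + 2*x^2*(l-1)^2)))*d^2
          + (4*x*(v-1)*(v+l)*(4*l*(x^2-1)*(v+l-1) - v*(v-1)))*d*c
          + (2*(v-1)^2*(v+l)*(v+2*l-2*l*x^2))*c^2 := by
      apply quad_pos_aux _ _ _ sq hDC
      by_cases hd : d = 0
      · have hc : c ≠ 0 := by
          rcases hcd with h | h
          · exact h
          · exact absurd hd h
        have h2DC : (0:ℝ) < 2*(2*(v-1)^2*(v+l)*(v+2*l-2*l*x^2)) := by linarith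
        have hcc : 2*(2*(v-1)^2*(v+l)*(v+2*l-2*l*x^2))*c
            + (4*x*(v-1)*(v+l)*(4*l*(x^2-1)*(v+l-1) - v*(v-1)))*d ≠ 0 := by
          rw [hd]
          simpa using mul_ne_zero (ne_of_gt h2DC) hc
        have hsqpos : (0:ℝ) < (2*(2*(v-1)^2*(v+l)*(v+2*l-2*l*x^2))*c
            + (4*x*(v-1)*(v+l)*(4*l*(x^2-1)*(v+l-1) - v*(v-1)))*d)^2 :=
          lt_of_le_of_ne (sq_nonneg _) (Ne.symm (pow_ne_zero 2 hcc))
        linarith [hSx]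
      · have hx1' : (0:ℝ) < 1 - x^2 := by linarith
        have hpos : (0:ℝ) < (1-x^2)*(16*v*(v-1)^2*(v+2*l)*(v-1+2*l)^2*(v+l)^2)*d^2 := by
          have hd2 : (0:ℝ) < d^2 := by positivity
          positivity
        linarith [sq_nonneg (2*(2*(v-1)^2*(v+l)*(v+2*l-2*l*x^2))*c
          + (4*x*(v-1)*(v+l)*(4*l*(x^2-1)*(v+l-1) - v*(v-1)))*d)]
    exact div_pos_aux _ _ _ key hD (by linarith)

/-- Turán's inequality for ultraspherical polynomials: for `l > -1/2` and `n ≥ 1`,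
`Δ_{n,l}(x) ≥ 0` on `[-1,1]` and `Δ_{n,l}(x) > 0` on `(-1,1)`. -/
theorem turan_inequality_ultraspherical
    (l : ℝ) (hl : -(1/2 : ℝ) < l) (n : ℕ) (hn : 1 ≤ n)
    (p : ℕ → Polynomial ℝ)
    (hp0 : p 0 = 1) (hp1 : p 1 = Polynomial.X)
    (hrec : ∀ m : ℕ, 1 ≤ m → ∀ x : ℝ,
      ((m : ℝ) + 2 * l) * (p (m + 1)).eval x
        = 2 * ((m : ℝ) + l) * x * (p m).eval x - (m : ℝ) * (p (m - 1)).eval x)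
    (Δ : ℝ → ℝ)
    (hΔ : ∀ x : ℝ, Δ x = ((p n).eval x) ^ 2 - (p (n - 1)).eval x * (p (n + 1)).eval x) :
    (∀ x ∈ Set.Icc (-1 : ℝ) 1, 0 ≤ Δ x) ∧ (∀ x ∈ Set.Ioo (-1 : ℝ) 1, 0 < Δ x) := by
  have hl1 : (0:ℝ) < 1 + 2*l := by linarith
  -- consecutive values are never both zero
  have nz : ∀ (m : ℕ) (x : ℝ), (p m).eval x = 0 → (p (m+1)).eval x = 0 → False := by
    intro m
    induction m with
    | zero =>
      intro x h0 _
      rw [hp0] at h0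
      simp at h0
    | succ k ih =>
      intro x h1 h2
      have hr := hrec (k+1) (by omega) x
      have hk1 : (k+1) - 1 = k := by omega
      rw [hk1] at hr
      push_cast at hr
      have hzero : ((k:ℝ) + 1) * (p k).eval x = 0 := by
        rw [h1, h2] at hr
        linear_combination hr
      have hk0 : ((k:ℝ) + 1) ≠ 0 := by positivity
      have hpk : (p k).eval x = 0 := by
        rcases mul_eq_zero.mp hzero with h | h
        · exact absurd h hk0
        · exact h
      exact ih x hpk h1
  -- main induction: Δ_{m+1} ≥ 0 on [-1,1], > 0 on (-1,1)
  have main : ∀ (m : ℕ) (x : ℝ), x^2 ≤ 1 →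
      0 ≤ ((p (m+1)).eval x)^2 - (p m).eval x * (p (m+2)).eval x ∧
      (x^2 < 1 → 0 < ((p (m+1)).eval x)^2 - (p m).eval x * (p (m+2)).eval x) := by
    intro m
    induction m using Nat.strong_induction_on with
    | _ m ih =>
      obtain _ | m := m
      · -- base case Δ₁ = (1-x²)/(1+2l)
        intro x hx
        have hr := hrec 1 le_rfl x
        norm_num at hr
        rw [hp0, hp1] at hr
        simp only [Polynomial.eval_X, Polynomial.eval_one] at hr
        rw [hp0, hp1]
        simp only [Polynomial.eval_X, Polynomial.eval_one]
        have hval : (1+2*l) * (x^2 - 1 * (p 2).eval x) = 1 - x^2 := by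
          linear_combination -hr
        constructor
        · exact div_nonneg_aux _ _ _ hval hl1 (by linarith)
        · intro hx2
          exact div_pos_aux _ _ _ hval hl1 (by linarith)
      obtain _ | m := m
      · -- base case Δ₂
        intro x hx
        have hr1 := hrec 1 le_rfl x
        norm_num at hr1
        rw [hp0, hp1] at hr1
        simp only [Polynomial.eval_X, Polynomial.eval_one] at hr1
        have hr2 := hrec 2 (by omega) x
        norm_num at hr2
        rw [hp1] at hr2
        simp only [Polynomial.eval_X] at hr2
        rw [hp1]
        simp only [Polynomial.eval_X]
        have hval : ((1+2*l)^2*(2+2*l)) * (((p 2).eval x)^2 - x * (p 3).eval x)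
            = (1-x^2) * (2*(1 + l + 2*l*(1+l)*x^2)) := by
          linear_combination
            ((-2) + 2*(p 2).eval x + (-2)*l + 6*l*(p 2).eval x + (-2)*l*x^2
              + 4*l^2*(p 2).eval x) * hr1
            + ((-1)*x + (-4)*l*x + (-4)*l^2*x) * hr2
        have hfac : (0:ℝ) < 1 + l + 2*l*(1+l)*x^2 := by
          rcases le_or_gt 0 l with h | h
          · nlinarith
          · nlinarith
        have h22 : (0:ℝ) < 2+2*l := by linarith
        have hD2 : (0:ℝ) < (1+2*l)^2*(2+2*l) := by positivity
        constructor
        · apply div_nonneg_aux _ _ _ hval hD2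
          have : (0:ℝ) ≤ 1 - x^2 := by linarith
          positivity
        · intro hx2
          apply div_pos_aux _ _ _ hval hD2
          have : (0:ℝ) < 1 - x^2 := by linarith
          positivity
      · -- inductive step: m+2, using Δ_{m+1} (index m in `main`)
        intro x hx
        obtain ⟨hprev, _⟩ := ih m (by omega) x hx
        have hr1 := hrec (m+1) (by omega) x
        have hr2 := hrec (m+2) (by omega) x
        have hr3 := hrec (m+3) (by omega) x
        have hk1 : (m+1) - 1 = m := by omega
        have hk2 : (m+2) - 1 = m+1 := by omega
        have hk3 : (m+3) - 1 = m+2 := by omega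
        rw [hk1] at hr1; rw [hk2] at hr2; rw [hk3] at hr3
        push_cast at hr1 hr2 hr3
        have hv2 : (2:ℝ) ≤ (m:ℝ) + 2 := by
          have : (0:ℝ) ≤ (m:ℝ) := Nat.cast_nonneg m
          linarith
        have hstep := turan_step l x ((p m).eval x) ((p (m+1)).eval x) ((p (m+2)).eval x)
          ((p (m+3)).eval x) ((p (m+4)).eval x) ((m:ℝ)+2) hv2 hl hx
          (by linear_combination hr1) (by linear_combination hr2) (by linear_combination hr3)
          hprev
        refine ⟨hstep.1, fun hx2 => hstep.2 hx2 ?_⟩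
        by_contra h
        push_neg at h
        exact nz m x h.1 h.2
  have hsub1 : n - 1 + 1 = n := by omega
  have hsub2 : n - 1 + 2 = n + 1 := by omega
  constructor
  · intro x hx
    rw [hΔ x]
    have hx2 : x^2 ≤ 1 := by nlinarith [hx.1, hx.2]
    have h := (main (n-1) x hx2).1
    rw [hsub1, hsub2] at h
    linarith [h]
  · intro x hx
    rw [hΔ x]
    have hx2 : x^2 < 1 := by nlinarith [hx.1, hx.2]
    have h := (main (n-1) x (le_of_lt hx2)).2 hx2
    rw [hsub1, hsub2] at h
    linarith [h]
end

section
/- Let λ > −1/2 and let n ≥ 1 be an integer. Suppose x_1 < x_2 < ⋯ < x_n are n distinct real numbers in (−1, 1) which are exactly the roots of p_n^{(λ)}, and let ℓ_1, …, ℓ_n denote the Lagrange basis polynomials for interpolation at the nodes x_1, …, x_n. Then for all real x, Δ_{n,λ}(x) = (1 − x²)/(n(n + 2λ)) · Σ_{k=1}^{n} ℓ_k(x)² (1 − x_k x) (p_n^{(λ)′}(x_k))². -/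
/-!
Write `P = p_n = c ∏ₖ (X - xₖ)` and `Pₖ = P / (X - xₖ)`. Then `ℓₖ P'(xₖ) = Pₖ`, and
`P'² - P P'' = ∑ₖ Pₖ²`, `P P' = P ∑ₖ Pₖ = ∑ₖ (X - xₖ) Pₖ²`, so splitting
`1 - xₖ y = (1 - y²) + y (y - xₖ)` turns the sum into `(1 - y²)(P'² - P P'') + y P P'` at `y`.
On the other side, the derivative relations of the ultraspherical polynomials express
`p_{n-1}` and `p_{n+1}` through `P` and `P'`, and the differential equation
`(1 - x²) P'' = (2λ + 1) x P' - n(n + 2λ) P` then gives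
`n(n + 2λ) Δₙ = (1 - x²)((1 - x²)(P'² - P P'') + x P P')`.
-/

open Polynomial Finset

theorem Polynomial.one_sub_X_sq_ne_zero {R : Type*} [CommRing R] [Nontrivial R] :
    (1 - X ^ 2 : R[X]) ≠ 0 := fun h => by
  simpa using congrArg (eval 0) h

namespace Lagrange

variable {ι : Type*}

theorem eq_C_mul_nodal_of_natDegree_le {F : Type*} [Field F] {s : Finset ι} {v : ι → F}
    (hvs : Set.InjOn v s) {P : F[X]} (hdeg : P.natDegree ≤ #s)
    (hroots : ∀ i ∈ s, P.eval (v i) = 0) : P = C (P.coeff #s) * nodal s v := by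
  refine eq_of_degree_sub_lt_of_eval_index_eq s hvs ?_ fun i hi => by
    rw [hroots i hi, eval_mul, eval_nodal_at_node hi, mul_zero]
  rw [degree_lt_iff_coeff_zero]
  intro m hm
  rw [coeff_sub, coeff_C_mul]
  obtain rfl | hm := hm.eq_or_lt
  · rw [← natDegree_nodal (v := v), nodal_monic.coeff_natDegree, natDegree_nodal, mul_one,
      sub_self]
  · have hm' : (nodal s v).natDegree < m := by rwa [natDegree_nodal]
    rw [coeff_eq_zero_of_natDegree_lt (hdeg.trans_lt hm), coeff_eq_zero_of_natDegree_lt hm',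
      mul_zero, sub_zero]

variable [DecidableEq ι]

theorem derivative_nodal_sq_sub_nodal_mul_derivative_derivative {R : Type*} [CommRing R]
    (s : Finset ι) (v : ι → R) :
    derivative (nodal s v) ^ 2 - nodal s v * derivative (derivative (nodal s v)) =
      ∑ i ∈ s, nodal (s.erase i) v ^ 2 := by
  induction s using Finset.induction_on with
  | empty => simp
  | insert a s ha ih =>
    have hsum : ∑ i ∈ s, nodal ((insert a s).erase i) v ^ 2 =
        (X - C (v a)) ^ 2 * ∑ i ∈ s, nodal (s.erase i) v ^ 2 := by
      rw [mul_sum]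
      refine sum_congr rfl fun i hi => ?_
      rw [erase_insert_of_ne (ne_of_mem_of_not_mem hi ha).symm,
        nodal_insert_eq_nodal (mt mem_of_mem_erase ha), mul_pow]
    rw [sum_insert ha, erase_insert ha, hsum, ← ih, nodal_insert_eq_nodal ha]
    simp only [derivative_mul, derivative_add, derivative_sub, derivative_X, derivative_C,
      sub_zero, one_mul]
    ring

variable {F : Type*} [Field F] {s : Finset ι} {v : ι → F}

theorem basis_mul_C_eval_derivative_nodal (hvs : Set.InjOn v s) {i : ι} (hi : i ∈ s) :
    Lagrange.basis s v i * C (eval (v i) (derivative (nodal s v))) = nodal (s.erase i) v := by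
  rw [basis_eq_prod_sub_inv_mul_nodal_div hi, ← nodal_erase_eq_nodal_div hi, mul_right_comm,
    ← C_mul, nodalWeight_eq_eval_derivative_nodal hi,
    inv_mul_cancel₀ (by simpa [nodalWeight_eq_eval_derivative_nodal hi] using
      nodalWeight_ne_zero hvs hi), C_1, one_mul]

section

variable {P : F[X]} {c : F}

theorem sum_C_eval_derivative_sq_mul_basis_sq (hvs : Set.InjOn v s) (hP : P = C c * nodal s v) :
    ∑ i ∈ s, C (eval (v i) (derivative P)) ^ 2 * Lagrange.basis s v i ^ 2 =
      derivative P ^ 2 - P * derivative (derivative P) := by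
  subst hP
  simp only [derivative_C_mul, eval_mul, eval_C, C_mul]
  calc _ = ∑ i ∈ s, C c ^ 2 * nodal (s.erase i) v ^ 2 := sum_congr rfl fun i hi => by
          rw [← basis_mul_C_eval_derivative_nodal hvs hi]; ring
    _ = _ := by rw [← mul_sum, ← derivative_nodal_sq_sub_nodal_mul_derivative_derivative]; ring

theorem sum_C_eval_derivative_sq_mul_X_sub_C_mul_basis_sq (hvs : Set.InjOn v s)
    (hP : P = C c * nodal s v) :
    ∑ i ∈ s, C (eval (v i) (derivative P)) ^ 2 * (X - C (v i)) * Lagrange.basis s v i ^ 2 =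
      P * derivative P := by
  subst hP
  simp only [derivative_C_mul, eval_mul, eval_C, C_mul]
  calc _ = ∑ i ∈ s, C c ^ 2 * nodal s v * nodal (s.erase i) v := sum_congr rfl fun i hi => by
          have hb := basis_mul_C_eval_derivative_nodal hvs hi
          linear_combination (C c ^ 2 * (X - C (v i)) * (Lagrange.basis s v i *
              C (eval (v i) (derivative (nodal s v))) + nodal (s.erase i) v)) * hb -
            C c ^ 2 * nodal (s.erase i) v * nodal_eq_mul_nodal_erase (v := v) hi
    _ = _ := by rw [← mul_sum, derivative_nodal]; ring

theorem sum_eval_basis_sq_mul_one_sub_mul_eval_derivative_sq (hvs : Set.InjOn v s)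
    (hP : P = C c * nodal s v) (y : F) :
    ∑ i ∈ s, eval y (Lagrange.basis s v i) ^ 2 * (1 - v i * y) * eval (v i) (derivative P) ^ 2 =
      (1 - y ^ 2) * eval y (derivative P ^ 2 - P * derivative (derivative P)) +
        y * eval y (P * derivative P) := by
  rw [← sum_C_eval_derivative_sq_mul_basis_sq hvs hP,
    ← sum_C_eval_derivative_sq_mul_X_sub_C_mul_basis_sq hvs hP]
  simp only [eval_finsetSum, eval_mul, eval_pow, eval_C, eval_sub, eval_X, mul_sum,
    ← sum_add_distrib]
  exact sum_congr rfl fun i _ => by ring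

end

end Lagrange

/-- The three-term recurrence `(m + 2λ) p_{m+1} = 2(m + λ) x p_m - m p_{m-1}`, shifted to
`m + 1` so that no truncated subtraction occurs. -/
structure IsUltraspherical (l : ℝ) (p : ℕ → ℝ[X]) : Prop where
  zero : p 0 = 1
  one : p 1 = X
  succ_succ (m : ℕ) :
    ((m : ℝ[X]) + 1 + 2 * C l) * p (m + 2) =
      2 * ((m : ℝ[X]) + 1 + C l) * X * p (m + 1) - ((m : ℝ[X]) + 1) * p m

theorem isUltraspherical_of_forall_eval {l : ℝ} {p : ℕ → ℝ[X]} (hp0 : p 0 = 1) (hp1 : p 1 = X)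
    (hrec : ∀ m : ℕ, 1 ≤ m → ∀ x : ℝ,
      ((m : ℝ) + 2 * l) * (p (m + 1)).eval x
        = 2 * ((m : ℝ) + l) * x * (p m).eval x - (m : ℝ) * (p (m - 1)).eval x) :
    IsUltraspherical l p where
  zero := hp0
  one := hp1
  succ_succ m := Polynomial.funext fun x => by
    have h := hrec (m + 1) (by omega) x
    simp only [eval_mul, eval_add, eval_sub, eval_natCast, eval_one, eval_ofNat, eval_C, eval_X]
    push_cast at h
    simpa using h

namespace IsUltraspherical

variable {l : ℝ} {p : ℕ → ℝ[X]}

private theorem natCast_add_one_add_two_mul_pos (hl : -(1 / 2 : ℝ) < l) (n : ℕ) :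
    (0 : ℝ) < n + 1 + 2 * l := by
  linarith [(n.cast_nonneg : (0 : ℝ) ≤ n)]

private theorem natCast_add_one_add_two_mul_C (n : ℕ) :
    (n + 1 + 2 * C l : ℝ[X]) = C (n + 1 + 2 * l) := by
  simp [map_ofNat]

theorem natDegree_le (hp : IsUltraspherical l p) (hl : -(1 / 2 : ℝ) < l) (n : ℕ) :
    (p n).natDegree ≤ n := by
  induction n using Nat.twoStepInduction with
  | zero => simp [hp.zero]
  | one => simp [hp.one]
  | more n ih₀ ih₁ =>
    rw [← natDegree_C_mul (natCast_add_one_add_two_mul_pos hl n).ne',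
      ← natCast_add_one_add_two_mul_C, hp.succ_succ]
    refine natDegree_sub_le_of_le (natDegree_mul_le_of_le (by compute_degree) ih₁)
      (natDegree_mul_le_of_le (by compute_degree) ih₀) |>.trans ?_
    omega

theorem one_sub_X_sq_mul_derivative (hp : IsUltraspherical l p) (hl : -(1 / 2 : ℝ) < l)
    (n : ℕ) : (1 - X ^ 2) * derivative (p n) = ((n : ℝ[X]) + 2 * C l) * (X * p n - p (n + 1)) := by
  induction n using Nat.twoStepInduction with
  | zero => simp [hp.zero, hp.one]
  | one =>
    have h := hp.succ_succ 0
    simp only [hp.zero, hp.one, Nat.cast_zero, Nat.cast_one, zero_add, derivative_X] at h ⊢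
    linear_combination h
  | more n hB₀ hB₁ =>
    have hR₀ := hp.succ_succ n
    have hR₁ := hp.succ_succ (n + 1)
    have hdR₀ := congrArg derivative hR₀
    simp only [derivative_mul, derivative_add, derivative_sub, derivative_natCast, derivative_one,
      derivative_C, derivative_X, derivative_ofNat] at hdR₀
    push_cast at *
    apply mul_left_cancel₀ (a := (n + 1 + 2 * C l : ℝ[X]))
    · rw [natCast_add_one_add_two_mul_C, C_ne_zero]
      exact (natCast_add_one_add_two_mul_pos hl n).ne'
    linear_combination (1 - X ^ 2) * hdR₀ + 2 * (n + 1 + C l) * X * hB₁ - (n + 1) * hB₀ +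
      (n + 1 + 2 * C l) * hR₁ - (n + 2 * C l) * X * hR₀

theorem one_sub_X_sq_mul_derivative_succ (hp : IsUltraspherical l p) (hl : -(1 / 2 : ℝ) < l)
    (n : ℕ) :
    (1 - X ^ 2) * derivative (p (n + 1)) = ((n : ℝ[X]) + 1) * (p n - X * p (n + 1)) := by
  have hB := hp.one_sub_X_sq_mul_derivative hl (n + 1)
  push_cast at hB
  linear_combination hB - hp.succ_succ n

theorem one_sub_X_sq_mul_derivative_derivative (hp : IsUltraspherical l p)
    (hl : -(1 / 2 : ℝ) < l) (n : ℕ) :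
    (1 - X ^ 2) * derivative (derivative (p n)) =
      (2 * C l + 1) * X * derivative (p n) - (n : ℝ[X]) * ((n : ℝ[X]) + 2 * C l) * p n := by
  have hB := hp.one_sub_X_sq_mul_derivative hl n
  have hdB := congrArg derivative hB
  simp only [derivative_mul, derivative_add, derivative_sub, derivative_natCast, derivative_one,
    derivative_C, derivative_X, derivative_ofNat, derivative_X_sq, map_ofNat] at hdB
  apply mul_left_cancel₀ one_sub_X_sq_ne_zero
  linear_combination (1 - X ^ 2) * hdB -
    (n + 2 * C l) * hp.one_sub_X_sq_mul_derivative_succ hl n + (n + 1) * X * hB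

theorem mul_sq_sub_mul_eq (hp : IsUltraspherical l p) (hl : -(1 / 2 : ℝ) < l) (n : ℕ) :
    ((n : ℝ[X]) + 1) * ((n : ℝ[X]) + 1 + 2 * C l) * (p (n + 1) ^ 2 - p n * p (n + 2)) =
      (1 - X ^ 2) * ((1 - X ^ 2) * (derivative (p (n + 1)) ^ 2 -
        p (n + 1) * derivative (derivative (p (n + 1)))) +
          X * p (n + 1) * derivative (p (n + 1))) := by
  have hB := hp.one_sub_X_sq_mul_derivative hl (n + 1)
  have hO := hp.one_sub_X_sq_mul_derivative_derivative hl (n + 1)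
  push_cast at hB hO
  linear_combination (1 - X ^ 2) * p (n + 1) * hO +
    (n + 1 + 2 * C l) * p (n + 2) * hp.one_sub_X_sq_mul_derivative_succ hl n -
    ((1 - X ^ 2) * derivative (p (n + 1)) + (n + 1) * X * p (n + 1)) * hB

end IsUltraspherical

theorem turan_determinant_lagrange_representation_general
    (l : ℝ) (hl : -(1/2 : ℝ) < l) (n : ℕ) (hn : 1 ≤ n)
    (p : ℕ → Polynomial ℝ)
    (hp0 : p 0 = 1) (hp1 : p 1 = Polynomial.X)
    (hrec : ∀ m : ℕ, 1 ≤ m → ∀ x : ℝ,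
      ((m : ℝ) + 2 * l) * (p (m + 1)).eval x
        = 2 * ((m : ℝ) + l) * x * (p m).eval x - (m : ℝ) * (p (m - 1)).eval x)
    (x : Fin n → ℝ) (hmono : StrictMono x)
    (hroots : ∀ y : ℝ, (p n).eval y = 0 ↔ ∃ k, x k = y) :
    ∀ y : ℝ,
      ((p n).eval y) ^ 2 - (p (n - 1)).eval y * (p (n + 1)).eval y
        = (1 - y ^ 2) / ((n : ℝ) * ((n : ℝ) + 2 * l)) *
            ∑ k : Fin n,
              ((Lagrange.basis Finset.univ x k).eval y) ^ 2 * (1 - x k * y) *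
                ((Polynomial.derivative (p n)).eval (x k)) ^ 2 := by
  intro y
  have hp := isUltraspherical_of_forall_eval hp0 hp1 hrec
  have hvs : Set.InjOn x (univ : Finset (Fin n)) := hmono.injective.injOn
  have hfac := Lagrange.eq_C_mul_nodal_of_natDegree_le hvs (P := p n)
    (by simpa using hp.natDegree_le hl n) fun k _ => (hroots _).mpr ⟨k, rfl⟩
  rw [Lagrange.sum_eval_basis_sq_mul_one_sub_mul_eval_derivative_sq hvs hfac y]
  obtain ⟨m, rfl⟩ := Nat.exists_eq_add_of_le' hn
  have hturan := congrArg (eval y) (hp.mul_sq_sub_mul_eq hl m)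
  simp only [eval_mul, eval_add, eval_sub, eval_pow, eval_natCast, eval_one, eval_ofNat, eval_C,
    eval_X] at hturan ⊢
  have hN : ((m + 1 : ℕ) : ℝ) * ((m + 1 : ℕ) + 2 * l) ≠ 0 := by
    have hpos : (0 : ℝ) < m + 1 + 2 * l := by linarith [(m.cast_nonneg : (0 : ℝ) ≤ m)]
    push_cast
    exact mul_ne_zero (by positivity) hpos.ne'
  rw [div_mul_eq_mul_div, eq_div_iff hN]
  push_cast
  linear_combination hturan

/-- Representation of the Turán determinant: if `x 0 < ⋯ < x (n-1)` in `(-1,1)` are exactly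
the roots of `p n`, and `ℓ k` is the Lagrange basis polynomial at these nodes, then
`Δ_{n,l}(y) = (1 - y²)/(n(n+2l)) ∑ₖ ℓₖ(y)² (1 - xₖ y) (pₙ′(xₖ))²`. -/
theorem turan_determinant_lagrange_representation
    (l : ℝ) (hl : -(1/2 : ℝ) < l) (n : ℕ) (hn : 1 ≤ n)
    (p : ℕ → Polynomial ℝ)
    (hp0 : p 0 = 1) (hp1 : p 1 = Polynomial.X)
    (hrec : ∀ m : ℕ, 1 ≤ m → ∀ x : ℝ,
      ((m : ℝ) + 2 * l) * (p (m + 1)).eval x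
        = 2 * ((m : ℝ) + l) * x * (p m).eval x - (m : ℝ) * (p (m - 1)).eval x)
    (x : Fin n → ℝ) (hmono : StrictMono x)
    (hx : ∀ k, x k ∈ Set.Ioo (-1 : ℝ) 1)
    (hroots : ∀ y : ℝ, (p n).eval y = 0 ↔ ∃ k, x k = y) :
    ∀ y : ℝ,
      ((p n).eval y) ^ 2 - (p (n - 1)).eval y * (p (n + 1)).eval y
        = (1 - y ^ 2) / ((n : ℝ) * ((n : ℝ) + 2 * l)) *
            ∑ k : Fin n,
              ((Lagrange.basis Finset.univ x k).eval y) ^ 2 * (1 - x k * y) *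
                ((Polynomial.derivative (p n)).eval (x k)) ^ 2 :=
  turan_determinant_lagrange_representation_general l hl n hn p hp0 hp1 hrec x hmono hroots
end

section
/- Let λ > −1/2 and let n ≥ 1 be an integer. Then for all real x, Δ_{n,λ}(x) = ((1 − x²)/(n(n + 2λ))) · [ n(n + 2λ) (p_n^{(λ)}(x))² − 2λ x p_n^{(λ)}(x) p_n^{(λ)′}(x) + (1 − x²)(p_n^{(λ)′}(x))² ]. -/
/-- For `l > -1/2` and `n ≥ 1`, the Turán determinant has the representation
`Δ_{n,l}(x) = ((1-x²)/(n(n+2l))) [n(n+2l) pₙ(x)² - 2l x pₙ(x) pₙ′(x) + (1-x²) pₙ′(x)²]`. -/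
theorem turan_determinant_quadratic_form
    (l : ℝ) (hl : -(1/2 : ℝ) < l) (n : ℕ) (hn : 1 ≤ n)
    (p : ℕ → Polynomial ℝ)
    (hp0 : p 0 = 1) (hp1 : p 1 = Polynomial.X)
    (hrec : ∀ m : ℕ, 1 ≤ m → ∀ x : ℝ,
      ((m : ℝ) + 2 * l) * (p (m + 1)).eval x
        = 2 * ((m : ℝ) + l) * x * (p m).eval x - (m : ℝ) * (p (m - 1)).eval x) :
    ∀ x : ℝ,
      ((p n).eval x) ^ 2 - (p (n - 1)).eval x * (p (n + 1)).eval x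
        = (1 - x ^ 2) / ((n : ℝ) * ((n : ℝ) + 2 * l)) *
            ((n : ℝ) * ((n : ℝ) + 2 * l) * ((p n).eval x) ^ 2
              - 2 * l * x * (p n).eval x * (Polynomial.derivative (p n)).eval x
              + (1 - x ^ 2) * ((Polynomial.derivative (p n)).eval x) ^ 2) := by
  have hne : ∀ m : ℕ, 1 ≤ m → ((m : ℝ) + 2 * l) ≠ 0 := by
    intro m hm
    have : (1 : ℝ) ≤ (m : ℝ) := by exact_mod_cast hm
    nlinarith
  -- polynomial-level recurrence
  have hprec : ∀ m : ℕ, 1 ≤ m →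
      Polynomial.C ((m : ℝ) + 2 * l) * p (m + 1)
        = Polynomial.C (2 * ((m : ℝ) + l)) * (Polynomial.X * p m)
          - Polynomial.C (m : ℝ) * p (m - 1) := by
    intro m hm
    apply Polynomial.funext
    intro x
    simp only [Polynomial.eval_mul, Polynomial.eval_sub, Polynomial.eval_C, Polynomial.eval_X]
    linear_combination hrec m hm x
  -- derivative recurrence at eval level
  have hdrec : ∀ m : ℕ, 1 ≤ m → ∀ x : ℝ,
      ((m : ℝ) + 2 * l) * (Polynomial.derivative (p (m + 1))).eval x
        = 2 * ((m : ℝ) + l) * ((p m).eval x + x * (Polynomial.derivative (p m)).eval x)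
          - (m : ℝ) * (Polynomial.derivative (p (m - 1))).eval x := by
    intro m hm x
    have h := congrArg (fun q => (Polynomial.derivative q).eval x) (hprec m hm)
    simp only [Polynomial.derivative_mul, Polynomial.derivative_sub, Polynomial.derivative_C,
      Polynomial.derivative_X, Polynomial.eval_add, Polynomial.eval_sub, Polynomial.eval_mul,
      Polynomial.eval_C, Polynomial.eval_X, Polynomial.eval_one, zero_mul, one_mul,
      zero_add, add_zero] at h
    linear_combination h
  -- the key derivative identity: (1-x²) pₙ' = n (p_{n-1} - x pₙ)
  have key : ∀ k : ℕ,
      (∀ x : ℝ, (1 - x ^ 2) * (Polynomial.derivative (p k)).eval x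
        = (k : ℝ) * ((p (k - 1)).eval x - x * (p k).eval x)) ∧
      (∀ x : ℝ, (1 - x ^ 2) * (Polynomial.derivative (p (k + 1))).eval x
        = ((k : ℝ) + 1) * ((p k).eval x - x * (p (k + 1)).eval x)) := by
    intro k
    induction k with
    | zero =>
      constructor
      · intro x; simp [hp0]
      · intro x; simp [hp0, hp1]; ring
    | succ k ih =>
      refine ⟨?_, ?_⟩
      · intro x
        have h := ih.2 x
        push_cast
        simpa using h
      · intro x
        rcases Nat.eq_zero_or_pos k with rfl | hk
        · -- Q 2 from the recurrence at m = 1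
          have A := hdrec 1 le_rfl x
          have D := hrec 1 le_rfl x
          simp only [Nat.sub_self, hp0, hp1, Polynomial.derivative_X, Polynomial.derivative_one,
            Polynomial.eval_one, Polynomial.eval_X, Polynomial.eval_zero, Nat.cast_one] at A D
          have h0 := hne 1 le_rfl
          push_cast
          have H : ((1 : ℝ) + 2 * l) * ((1 - x ^ 2) * (Polynomial.derivative (p 2)).eval x)
              = ((1 : ℝ) + 2 * l) * ((1 + 1) * ((p 1).eval x - x * (p 2).eval x)) := by
            rw [hp1]; simp only [Polynomial.eval_X]
            linear_combination (1 - x ^ 2) * A + 2 * x * D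
          have := mul_left_cancel₀ (by push_cast at h0 ⊢; exact h0) H
          convert this using 2
        · -- general step, k ≥ 1
          have A := hdrec (k + 1) (Nat.le_add_left 1 k) x
          have B := ih.2 x
          have C := ih.1 x
          have D := hrec (k + 1) (Nat.le_add_left 1 k) x
          have E := hrec k hk x
          simp only [Nat.add_sub_cancel] at A D
          have h0 := hne (k + 1) (Nat.le_add_left 1 k)
          push_cast at A B C D E h0 ⊢
          have H : ((k : ℝ) + 1 + 2 * l) * ((1 - x ^ 2) * (Polynomial.derivative (p (k + 1 + 1))).eval x)
              = ((k : ℝ) + 1 + 2 * l) * (((k : ℝ) + 1 + 1) * ((p (k + 1)).eval x - x * (p (k + 1 + 1)).eval x)) := by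
            linear_combination (1 - x ^ 2) * A + 2 * ((k : ℝ) + 1 + l) * x * B
              - ((k : ℝ) + 1) * C + ((k : ℝ) + 1 + 1) * x * D - ((k : ℝ) + 1) * E
          exact mul_left_cancel₀ h0 H
  -- main computation
  intro x
  obtain ⟨k, rfl⟩ : ∃ k, n = k + 1 := ⟨n - 1, (Nat.succ_pred_eq_of_pos hn).symm⟩
  have B := (key (k + 1)).1 x
  have D := hrec (k + 1) hn x
  simp only [Nat.add_sub_cancel] at B D ⊢
  have h0 := hne (k + 1) hn
  have h1 : ((k : ℝ) + 1) ≠ 0 := by positivity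
  push_cast at B D h0 ⊢
  set En := (p (k + 1)).eval x
  set En1 := (p (k + 1 + 1)).eval x
  set Em := (p k).eval x
  set Dn := (Polynomial.derivative (p (k + 1))).eval x
  field_simp
  linear_combination (2 * l * x * En - (1 - x ^ 2) * Dn - ((k : ℝ) + 1) * (Em - x * En)) * B
    - ((k : ℝ) + 1) * Em * D
end

section
/- Let λ > −1/2 and let n ≥ 1 be an integer. Then for all real x, the derivative of the normalized Turán function satisfies φ_{n,λ}′(x) = (2λ/(n(n + 2λ))) · [ x (p_n^{(λ)′}(x))² − p_n^{(λ)}(x) p_n^{(λ)′}(x) − x p_n^{(λ)}(x) p_n^{(λ)″}(x) ]. -/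
open Polynomial


/-- For `l > -1/2` and `n ≥ 1`, the derivative of the normalized Turán function satisfies
`φ′(x) = (2l/(n(n+2l))) [x pₙ′(x)² - pₙ(x) pₙ′(x) - x pₙ(x) pₙ″(x)]` for all real `x`. -/
theorem turan_normalized_derivative_formula
    (l : ℝ) (hl : -(1/2 : ℝ) < l) (n : ℕ) (hn : 1 ≤ n)
    (p : ℕ → Polynomial ℝ)
    (hp0 : p 0 = 1) (hp1 : p 1 = Polynomial.X)
    (hrec : ∀ m : ℕ, 1 ≤ m → ∀ x : ℝ,
      ((m : ℝ) + 2 * l) * (p (m + 1)).eval x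
        = 2 * ((m : ℝ) + l) * x * (p m).eval x - (m : ℝ) * (p (m - 1)).eval x)
    (φ : Polynomial ℝ)
    (hφ : ∀ x : ℝ, (1 - x ^ 2) * φ.eval x
        = ((p n).eval x) ^ 2 - (p (n - 1)).eval x * (p (n + 1)).eval x) :
    ∀ x : ℝ,
      (Polynomial.derivative φ).eval x
        = 2 * l / ((n : ℝ) * ((n : ℝ) + 2 * l)) *
            (x * ((Polynomial.derivative (p n)).eval x) ^ 2
              - (p n).eval x * (Polynomial.derivative (p n)).eval x
              - x * (p n).eval x
                  * (Polynomial.derivative (Polynomial.derivative (p n))).eval x) := by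
  have hrecP : ∀ m : ℕ, 1 ≤ m →
      Polynomial.C ((m : ℝ) + 2 * l) * p (m + 1)
        = Polynomial.C (2 * ((m : ℝ) + l)) * Polynomial.X * p m
          - Polynomial.C ((m : ℝ)) * p (m - 1) := by
    intro m hm
    apply Polynomial.funext
    intro x
    simp only [eval_mul, eval_sub, eval_C, eval_X]
    linear_combination hrec m hm x
  -- pointwise derivative of recurrence
  have hdrec : ∀ m : ℕ, 1 ≤ m → ∀ x : ℝ,
      ((m : ℝ) + 2 * l) * (derivative (p (m + 1))).eval x
        = 2 * ((m : ℝ) + l) * ((p m).eval x + x * (derivative (p m)).eval x)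
          - (m : ℝ) * (derivative (p (m - 1))).eval x := by
    intro m hm x
    have h := congrArg (fun q => (derivative q).eval x) (hrecP m hm)
    simp only [derivative_mul, derivative_sub, derivative_C, derivative_X, eval_mul, eval_add,
      eval_sub, eval_C, eval_X, eval_zero, eval_one, zero_mul, mul_one, zero_add] at h
    linear_combination h
  have hpos : ∀ m : ℕ, (0:ℝ) < (m : ℝ) + 1 + 2 * l := by
    intro m
    have : (0:ℝ) ≤ (m:ℝ) := Nat.cast_nonneg m
    linarith
  -- B_m pointwise, pair induction
  have hBx : ∀ m : ℕ, ∀ x : ℝ, (1 - x ^ 2) * (derivative (p m)).eval x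
      = ((m : ℝ) + 2 * l) * (x * (p m).eval x - (p (m + 1)).eval x) := by
    have key : ∀ m : ℕ, (∀ x : ℝ, (1 - x ^ 2) * (derivative (p m)).eval x
        = ((m : ℝ) + 2 * l) * (x * (p m).eval x - (p (m + 1)).eval x)) ∧
        (∀ x : ℝ, (1 - x ^ 2) * (derivative (p (m+1))).eval x
        = (((m+1 : ℕ):ℝ) + 2 * l) * (x * (p (m+1)).eval x - (p (m + 1 + 1)).eval x)) := by
      intro m
      induction m with
      | zero =>
        constructor
        · intro x
          simp [hp0, hp1]
        · intro x
          have h := hrec 1 le_rfl x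
          push_cast at h
          simp only [hp0, hp1, eval_X, eval_one] at h
          simp only [hp1, derivative_X, eval_one, eval_X]
          push_cast
          linear_combination h
      | succ k ih =>
        refine ⟨ih.2, ?_⟩
        intro x
        have h1 := hdrec (k+1) (by omega) x
        have h2 := ih.2 x
        have h3 := ih.1 x
        have h4 := hrec (k+2) (by omega) x
        push_cast at h1 h2 h3 h4 ⊢
        have hane : ((k:ℝ) + 1 + 2 * l) ≠ 0 := ne_of_gt (hpos k)
        apply mul_left_cancel₀ hane
        try simp only [Nat.add_sub_cancel] at h1
        have e2 : k + 1 + 1 = k + 2 := by omega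
        rw [e2] at h1 h2 ⊢
        have h5 := hrec (k+1) (by omega) x
        push_cast at h5
        try simp only [Nat.add_sub_cancel] at h5
        rw [e2] at h5
        linear_combination (1 - x^2) * h1 + (2*((k:ℝ)+1+l)*x) * h2 - ((k:ℝ)+1) * h3
          + ((k:ℝ)+1+2*l) * h4 - (((k:ℝ)+2*l)*x) * h5
    exact fun m => (key m).1
  have h1mX2 : (1 - Polynomial.X ^ 2 : Polynomial ℝ) ≠ 0 := by
    intro h
    have := congrArg (Polynomial.eval 0) h
    simp at this
  have hn1 : (1:ℝ) ≤ (n:ℝ) := by exact_mod_cast hn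
  have hcne : ((n:ℝ) * ((n:ℝ) + 2 * l)) ≠ 0 := by
    have : (0:ℝ) < (n:ℝ) + 2*l := by linarith
    positivity
  -- polynomial version of B at n
  have hBP : (1 - Polynomial.X ^ 2) * derivative (p n)
      = Polynomial.C ((n:ℝ) + 2 * l) * (Polynomial.X * p n - p (n+1)) := by
    apply Polynomial.funext
    intro x
    simp only [eval_mul, eval_sub, eval_one, eval_pow, eval_X, eval_C]
    exact hBx n x
  -- derivative of B at n, pointwise
  have hdB : ∀ x : ℝ, (-(2*x)) * (derivative (p n)).eval x
      + (1 - x^2) * (derivative (derivative (p n))).eval x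
      = ((n:ℝ) + 2*l) * ((p n).eval x + x * (derivative (p n)).eval x
          - (derivative (p (n+1))).eval x) := by
    intro x
    have h := congrArg (fun q => (derivative q).eval x) hBP
    simp only [derivative_mul, derivative_sub, derivative_C, derivative_X, derivative_one,
      derivative_pow, eval_mul, eval_add, eval_sub, eval_C, eval_X, eval_one, eval_pow,
      eval_zero, zero_mul, mul_one, zero_add, zero_sub, pow_one, eval_neg] at h
    norm_num at h
    linear_combination h
  -- ODE with (1-x^2) factor, pointwise
  have hODE2 : ∀ x : ℝ, (1 - x^2) * ((1 - x^2) * (derivative (derivative (p n))).eval x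
      - ((2*l+1) * x * (derivative (p n)).eval x
        - (n:ℝ) * ((n:ℝ) + 2*l) * (p n).eval x)) = 0 := by
    intro x
    have h1 := hdB x
    have h2 := hBx (n+1) x
    have h3 := hrec (n+1) (by omega) x
    have h4 := hBx n x
    push_cast at h2 h3
    try simp only [Nat.add_sub_cancel] at h3
    linear_combination (1 - x^2) * h1 - ((n:ℝ)+2*l) * h2 + ((n:ℝ)+2*l) * h3
      + (((n:ℝ)+1)*x) * h4
  -- cancel the factor to get the ODE
  have hODEP : (1 - Polynomial.X ^ 2) * derivative (derivative (p n))
      = Polynomial.C (2*l+1) * Polynomial.X * derivative (p n)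
        - Polynomial.C ((n:ℝ) * ((n:ℝ) + 2*l)) * p n := by
    have hz : (1 - Polynomial.X ^ 2) * ((1 - Polynomial.X ^ 2) * derivative (derivative (p n))
        - (Polynomial.C (2*l+1) * Polynomial.X * derivative (p n)
          - Polynomial.C ((n:ℝ) * ((n:ℝ) + 2*l)) * p n)) = 0 := by
      apply Polynomial.funext
      intro x
      simp only [eval_mul, eval_sub, eval_add, eval_one, eval_pow, eval_X, eval_C, eval_zero]
      linear_combination hODE2 x
    have := (mul_eq_zero.mp hz).resolve_left h1mX2
    exact sub_eq_zero.mp this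
  have hODEx : ∀ x : ℝ, (1 - x^2) * (derivative (derivative (p n))).eval x
      = (2*l+1) * x * (derivative (p n)).eval x
        - (n:ℝ) * ((n:ℝ) + 2*l) * (p n).eval x := by
    intro x
    have h := congrArg (Polynomial.eval x) hODEP
    simp only [eval_mul, eval_sub, eval_add, eval_one, eval_pow, eval_X, eval_C] at h
    linear_combination h
  have hA : ∀ x : ℝ, (n:ℝ) * (p (n-1)).eval x
      = (n:ℝ) * x * (p n).eval x + (1 - x^2) * (derivative (p n)).eval x := by
    intro x
    linear_combination hrec n hn x - hBx n x
  have hBB : ∀ x : ℝ, ((n:ℝ)+2*l) * (p (n+1)).eval x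
      = ((n:ℝ)+2*l) * x * (p n).eval x - (1 - x^2) * (derivative (p n)).eval x := by
    intro x
    linear_combination hBx n x
  have hφ' : ∀ x : ℝ, (1 - x^2) * ((n:ℝ)*((n:ℝ)+2*l) * φ.eval x
      - ((n:ℝ)*((n:ℝ)+2*l) * ((p n).eval x)^2
        - 2*l*x*((p n).eval x)*((derivative (p n)).eval x)
        + (1 - x^2) * ((derivative (p n)).eval x)^2)) = 0 := by
    intro x
    linear_combination ((n:ℝ)*((n:ℝ)+2*l)) * hφ x
      - (((n:ℝ)+2*l) * (p (n+1)).eval x) * hA x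
      - ((n:ℝ)*x*(p n).eval x + (1-x^2)*(derivative (p n)).eval x) * hBB x
  have hPhiP : Polynomial.C ((n:ℝ)*((n:ℝ)+2*l)) * φ
      = Polynomial.C ((n:ℝ)*((n:ℝ)+2*l)) * (p n)^2
        - Polynomial.C (2*l) * Polynomial.X * (p n * derivative (p n))
        + (1 - Polynomial.X^2) * (derivative (p n))^2 := by
    have hz : (1 - Polynomial.X ^ 2) * (Polynomial.C ((n:ℝ)*((n:ℝ)+2*l)) * φ
        - (Polynomial.C ((n:ℝ)*((n:ℝ)+2*l)) * (p n)^2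
          - Polynomial.C (2*l) * Polynomial.X * (p n * derivative (p n))
          + (1 - Polynomial.X^2) * (derivative (p n))^2)) = 0 := by
      apply Polynomial.funext
      intro x
      simp only [eval_mul, eval_sub, eval_add, eval_one, eval_pow, eval_X, eval_C, eval_zero]
      linear_combination hφ' x
    have := (mul_eq_zero.mp hz).resolve_left h1mX2
    exact sub_eq_zero.mp this
  intro x
  have hd := congrArg (fun q => (derivative q).eval x) hPhiP
  simp only [derivative_mul, derivative_C, derivative_sub, derivative_add, derivative_pow,
    derivative_X, derivative_one, eval_mul, eval_add, eval_sub, eval_C, eval_X, eval_one,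
    eval_pow, eval_zero, eval_neg, zero_mul, mul_one, zero_add, zero_sub, pow_one] at hd
  norm_num at hd
  rw [div_mul_eq_mul_div, eq_div_iff hcne]
  linear_combination hd + 2 * (derivative (p n)).eval x * hODEx x
end

section
/- Let λ > −1/2 with λ ≠ 0 and let n ≥ 2 be an integer. Suppose x_1 < x_2 < ⋯ < x_n are n distinct real numbers in (−1, 1) which are exactly the roots of p_n^{(λ)}. Then for every real x with x² ≠ x_k² for all k = 1, …, n, φ_{n,λ}′(x) = (4λx/(n(n + 2λ))) · Σ_{k=1}^{n} x_k² p_n^{(λ)}(x)² / (x² − x_k²)². -/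
open Polynomial

private lemma polyDerivProd {ι : Type*} [DecidableEq ι] (s : Finset ι) (f : ι → Polynomial ℝ) :
    derivative (∏ i ∈ s, f i) = ∑ i ∈ s, (∏ j ∈ s.erase i, f j) * derivative (f i) := by
  classical
  induction s using Finset.induction_on with
  | empty => simp
  | @insert a s ha ih =>
    have key : ∀ i ∈ s, (∏ j ∈ (insert a s).erase i, f j) * derivative (f i)
        = f a * ((∏ j ∈ s.erase i, f j) * derivative (f i)) := by
      intro i hi
      have hai : i ≠ a := fun h => ha (h ▸ hi)
      rw [Finset.erase_insert_of_ne hai.symm,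
        Finset.prod_insert (fun h => ha (Finset.mem_of_mem_erase h)), mul_assoc]
    rw [Finset.prod_insert ha, derivative_mul, ih, Finset.sum_insert ha, Finset.erase_insert ha,
      Finset.sum_congr rfl key, ← Finset.mul_sum]
    ring

private lemma cancel_eval {a b : Polynomial ℝ}
    (h : ∀ y : ℝ, (1 - y ^ 2) * a.eval y = (1 - y ^ 2) * b.eval y) :
    ∀ y : ℝ, a.eval y = b.eval y := by
  have h3 : (1 - X ^ 2 : Polynomial ℝ) ≠ 0 := fun hc => by
    simpa using congrArg (Polynomial.eval 0) hc
  have h2 : (1 - X ^ 2 : Polynomial ℝ) * a = (1 - X ^ 2) * b :=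
    Polynomial.funext fun r => by simpa using h r
  have := mul_left_cancel₀ h3 h2
  intro y; rw [this]

private lemma scalar_decomp (y a P : ℝ) (h1 : y - a ≠ 0) (h2 : y + a ≠ 0) :
    y * (a^2 * P^2 / (y^2 - a^2)^2)
      = (y/4) * (P^2/(y - a)^2) + (y/4)*(P^2/(y + a)^2)
        - (1/4)*(P^2/(y - a)) - (1/4)*(P^2/(y + a)) := by
  have h3 : y^2 - a^2 = (y-a)*(y+a) := by ring
  rw [h3]
  field_simp
  ring

/-- For `l > -1/2`, `l ≠ 0`, `n ≥ 2`, with `x 0 < ⋯ < x (n-1)` in `(-1,1)` exactly the roots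
of `pₙ`: for every real `y` with `y² ≠ xₖ²` for all `k`,
`φ′(y) = (4 l y/(n(n+2l))) ∑ₖ xₖ² pₙ(y)² / (y² - xₖ²)²`. -/
theorem turan_normalized_derivative_sum_formula
    (l : ℝ) (hl : -(1/2 : ℝ) < l) (hl0 : l ≠ 0) (n : ℕ) (hn : 2 ≤ n)
    (p : ℕ → Polynomial ℝ)
    (hp0 : p 0 = 1) (hp1 : p 1 = Polynomial.X)
    (hrec : ∀ m : ℕ, 1 ≤ m → ∀ x : ℝ,
      ((m : ℝ) + 2 * l) * (p (m + 1)).eval x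
        = 2 * ((m : ℝ) + l) * x * (p m).eval x - (m : ℝ) * (p (m - 1)).eval x)
    (x : Fin n → ℝ) (hmono : StrictMono x)
    (hx : ∀ k, x k ∈ Set.Ioo (-1 : ℝ) 1)
    (hroots : ∀ y : ℝ, (p n).eval y = 0 ↔ ∃ k, x k = y)
    (φ : Polynomial ℝ)
    (hφ : ∀ y : ℝ, (1 - y ^ 2) * φ.eval y
        = ((p n).eval y) ^ 2 - (p (n - 1)).eval y * (p (n + 1)).eval y) :
    ∀ y : ℝ, (∀ k, y ^ 2 ≠ (x k) ^ 2) →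
      (Polynomial.derivative φ).eval y
        = 4 * l * y / ((n : ℝ) * ((n : ℝ) + 2 * l)) *
            ∑ k : Fin n, (x k) ^ 2 * ((p n).eval y) ^ 2 / (y ^ 2 - (x k) ^ 2) ^ 2 := by
  obtain ⟨ν, rfl⟩ : ∃ ν, n = ν + 2 := ⟨n - 2, by omega⟩
  have hcast : ∀ m : ℕ, (0:ℝ) ≤ (m:ℝ) := fun m => Nat.cast_nonneg m
  have hcne : ∀ m : ℕ, ((m:ℝ) + 1 + 2*l) ≠ 0 := fun m => by
    have := hcast m; linarith
  -- recurrence, polynomial and derivative versions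
  have hrecD : ∀ m : ℕ, 1 ≤ m → ∀ y : ℝ,
      ((m:ℝ)+2*l) * (derivative (p (m+1))).eval y
        = 2*((m:ℝ)+l) * ((p m).eval y + y * (derivative (p m)).eval y)
          - (m:ℝ) * (derivative (p (m-1))).eval y := by
    intro m hm y
    have hrecP : C ((m:ℝ) + 2*l) * p (m+1) = C (2*((m:ℝ)+l)) * X * p m - C (m:ℝ) * p (m-1) :=
      Polynomial.funext fun z => by
        simp only [eval_mul, eval_sub, eval_C, eval_X]
        linear_combination hrec m hm z
    have h := congrArg (fun q => (derivative q).eval y) hrecP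
    simp only [derivative_mul, derivative_C, derivative_X, derivative_sub, eval_mul, eval_add,
      eval_sub, eval_C, eval_X, zero_mul, mul_one, one_mul, zero_add, zero_sub, sub_zero,
      pow_one, eval_neg, show (2:ℕ)-1 = 1 from rfl, Nat.cast_ofNat] at h
    linear_combination h
  -- the structure relation (B)
  have hB : ∀ m : ℕ, ∀ y : ℝ,
      (1 - y^2) * (derivative (p m)).eval y
        = ((m:ℝ) + 2*l) * (y * (p m).eval y - (p (m+1)).eval y) := by
    suffices H : ∀ m : ℕ, (∀ y : ℝ, (1 - y^2) * (derivative (p m)).eval y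
        = ((m:ℝ) + 2*l) * (y * (p m).eval y - (p (m+1)).eval y)) ∧
        (∀ y : ℝ, (1 - y^2) * (derivative (p (m+1))).eval y
        = (((m+1:ℕ):ℝ) + 2*l) * (y * (p (m+1)).eval y - (p (m+2)).eval y)) from
      fun m => (H m).1
    intro m
    induction m with
    | zero =>
      constructor
      · intro y; simp [hp0, hp1]
      · intro y
        have h := hrec 1 le_rfl y
        simp only [hp0, hp1, Nat.cast_one, eval_X, eval_one] at h ⊢
        push_cast
        simp only [derivative_X, eval_one]
        linear_combination h
    | succ m ih =>
      refine ⟨ih.2, ?_⟩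
      intro y
      have hm1 : 1 ≤ m + 1 := Nat.le_add_left 1 m
      have hR1 := hrec (m+1) hm1 y
      have hR2 := hrec (m+2) (by omega) y
      have hRD := hrecD (m+1) hm1 y
      have hBm := ih.1 y
      have hBm1 := ih.2 y
      simp only [Nat.add_sub_cancel] at hR1 hR2 hRD
      push_cast at hR1 hR2 hRD hBm hBm1 ⊢
      apply mul_left_cancel₀ (hcne m)
      linear_combination (1-y^2) * hRD + 2*((m:ℝ)+1+l)*y * hBm1 - ((m:ℝ)+1) * hBm
        + ((m:ℝ)+1+2*l) * hR2 - ((m:ℝ)+2*l)*y * hR1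
  -- parity
  have hpar : ∀ m : ℕ, ∀ y : ℝ, (p m).eval (-y) = (-1:ℝ)^m * (p m).eval y := by
    suffices H : ∀ m : ℕ, (∀ y : ℝ, (p m).eval (-y) = (-1:ℝ)^m * (p m).eval y) ∧
        (∀ y : ℝ, (p (m+1)).eval (-y) = (-1:ℝ)^(m+1) * (p (m+1)).eval y) from
      fun m => (H m).1
    intro m
    induction m with
    | zero => constructor <;> intro y <;> simp [hp0, hp1]
    | succ m ih =>
      refine ⟨ih.2, ?_⟩
      intro y
      have h1 := hrec (m+1) (by omega) (-y)
      have h2 := hrec (m+1) (by omega) y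
      simp only [Nat.add_sub_cancel] at h1 h2
      push_cast at h1 h2
      apply mul_left_cancel₀ (hcne m)
      rw [ih.1 y] at h1
      rw [ih.2 y] at h1
      simp only [pow_succ] at h1 ⊢
      linear_combination h1 - ((-1:ℝ)^m) * h2
  -- degree and leading coefficient
  have hdeg : ∀ m : ℕ, (p m).natDegree = m ∧ 0 < (p m).leadingCoeff := by
    suffices H : ∀ m : ℕ, ((p m).natDegree = m ∧ 0 < (p m).leadingCoeff) ∧
        ((p (m+1)).natDegree = m+1 ∧ 0 < (p (m+1)).leadingCoeff) from fun m => (H m).1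
    intro m
    induction m with
    | zero =>
      refine ⟨⟨by simp [hp0], by simp [hp0]⟩, ⟨by simp [hp1], by simp [hp1]⟩⟩
    | succ m ih =>
      refine ⟨ih.2, ?_⟩
      have hPne : p (m+1) ≠ 0 := leadingCoeff_ne_zero.mp (ne_of_gt ih.2.2)
      have hk1 : (2*(((m+1:ℕ):ℝ)+l)) ≠ 0 := by push_cast; have := hcast m; linarith
      have hk2 : (((m+1:ℕ):ℝ) + 2*l) ≠ 0 := by push_cast; exact hcne m
      have hk3 : (((m+1:ℕ):ℝ)) ≠ 0 := by push_cast; have := hcast m; linarith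
      have hrecP : C (((m+1:ℕ):ℝ) + 2*l) * p (m+2)
          = C (2*(((m+1:ℕ):ℝ)+l)) * (X * p (m+1)) - C ((m+1:ℕ):ℝ) * p m :=
        Polynomial.funext fun z => by
          have := hrec (m+1) (by omega) z
          simp only [Nat.add_sub_cancel] at this
          simp only [eval_mul, eval_sub, eval_C, eval_X]
          push_cast at this ⊢
          linear_combination this
      have hA : (C (2*(((m+1:ℕ):ℝ)+l)) * (X * p (m+1))).natDegree = m+2 := by
        rw [natDegree_C_mul hk1, natDegree_mul X_ne_zero hPne, natDegree_X, ih.2.1]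
        omega
      have hAlc : (C (2*(((m+1:ℕ):ℝ)+l)) * (X * p (m+1))).leadingCoeff
          = 2*(((m+1:ℕ):ℝ)+l) * (p (m+1)).leadingCoeff := by
        rw [leadingCoeff_mul, leadingCoeff_mul, leadingCoeff_C, leadingCoeff_X, one_mul]
      have hBdeg : (C ((m+1:ℕ):ℝ) * p m).natDegree
          < (C (2*(((m+1:ℕ):ℝ)+l)) * (X * p (m+1))).natDegree := by
        rw [hA, natDegree_C_mul hk3, ih.1.1]; omega
      have hsubdeg : (C (2*(((m+1:ℕ):ℝ)+l)) * (X * p (m+1))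
          - C ((m+1:ℕ):ℝ) * p m).natDegree = m+2 := by
        rw [natDegree_sub_eq_left_of_natDegree_lt hBdeg, hA]
      have hsublc : (C (2*(((m+1:ℕ):ℝ)+l)) * (X * p (m+1))
          - C ((m+1:ℕ):ℝ) * p m).leadingCoeff
          = 2*(((m+1:ℕ):ℝ)+l) * (p (m+1)).leadingCoeff := by
        rw [leadingCoeff_sub_of_degree_lt (degree_lt_degree hBdeg), hAlc]
      constructor
      · have := congrArg natDegree hrecP
        rwa [natDegree_C_mul hk2, hsubdeg] at this
      · have hlc := congrArg leadingCoeff hrecP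
        rw [hsublc, leadingCoeff_mul, leadingCoeff_C] at hlc
        have hk2pos : (0:ℝ) < ((m+1:ℕ):ℝ) + 2*l := by push_cast; have := hcast m; linarith
        have hrhs : (0:ℝ) < 2*(((m+1:ℕ):ℝ)+l) * (p (m+1)).leadingCoeff := by
          have := hcast m
          have := ih.2.2
          push_cast
          nlinarith
        nlinarith [hrhs, hk2pos, hlc]
  -- factorization of p (ν+2)
  have hq0 : p (ν+2) ≠ 0 := leadingCoeff_ne_zero.mp (ne_of_gt (hdeg (ν+2)).2)
  have hinj : Function.Injective x := hmono.injective
  set s : Finset ℝ := Finset.image x Finset.univ with hs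
  have hscard : s.card = (ν+2) := by
    rw [hs, Finset.card_image_of_injective _ hinj, Finset.card_univ, Fintype.card_fin]
  have hsub : s.val ≤ (p (ν+2)).roots := by
    rw [Multiset.le_iff_subset s.nodup]
    intro a ha
    rw [← Finset.mem_def, hs, Finset.mem_image] at ha
    obtain ⟨k, _, rfl⟩ := ha
    rw [mem_roots hq0]
    exact (hroots (x k)).mpr ⟨k, rfl⟩
  obtain ⟨r, hr⟩ := (Multiset.prod_X_sub_C_dvd_iff_le_roots hq0 s.val).mpr hsub
  have hWmon : ((s.val.map fun a => X - C a).prod).Monic :=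
    monic_multiset_prod_of_monic _ _ fun a _ => monic_X_sub_C a
  have hWdeg : ((s.val.map fun a => X - C a).prod).natDegree = (ν+2) := by
    rw [natDegree_multiset_prod_X_sub_C_eq_card]
    exact hscard
  have hrne : r ≠ 0 := fun h => hq0 (by rw [hr, h, mul_zero])
  have hrdeg : r.natDegree = 0 := by
    have h2 := congrArg natDegree hr
    rw [natDegree_mul hWmon.ne_zero hrne, hWdeg, (hdeg (ν+2)).1] at h2
    omega
  have hrC : r = C (r.coeff 0) := eq_C_of_natDegree_eq_zero hrdeg
  set c : ℝ := r.coeff 0 with hcdef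
  have hc0 : c ≠ 0 := fun h => hrne (by rw [hrC, h, map_zero])
  have hprod : (s.val.map fun a => X - C a).prod = ∏ k : Fin (ν+2), (X - C (x k)) := by
    rw [← Finset.prod_eq_multiset_prod, hs, Finset.prod_image (fun a _ b _ h => hinj h)]
  have hq : p (ν+2) = (∏ k : Fin (ν+2), (X - C (x k))) * C c := by
    rw [hr, hprod]; congr 1
  -- symmetry of roots
  have hsym : ∀ k, ∃ j, x j = -(x k) := by
    intro k
    apply (hroots (-(x k))).mp
    rw [hpar (ν+2) (x k), (hroots (x k)).mpr ⟨k, rfl⟩, mul_zero]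
  choose σ hσ using hsym
  have hσinj : Function.Injective σ := by
    intro a b h
    apply hinj
    have := congrArg x h
    rw [hσ a, hσ b] at this
    linarith
  let e : Fin (ν+2) ≃ Fin (ν+2) := Equiv.ofBijective σ (Finite.injective_iff_bijective.mp hσinj)
  have he : ∀ k, x (e k) = -(x k) := fun k => hσ k
  have hφ' : ∀ y : ℝ, (1 - y ^ 2) * φ.eval y
      = ((p (ν+2)).eval y) ^ 2 - (p (ν+1)).eval y * (p (ν+3)).eval y := hφ
  -- second-derivative relation
  have hDB : ∀ m : ℕ, ∀ y : ℝ,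
      -(2*y) * (derivative (p m)).eval y + (1-y^2) * (derivative (derivative (p m))).eval y
        = ((m:ℝ)+2*l) * ((p m).eval y + y * (derivative (p m)).eval y
            - (derivative (p (m+1))).eval y) := by
    intro m y
    have hBP : (1 - X^2) * derivative (p m) = C ((m:ℝ)+2*l) * (X * p m - p (m+1)) :=
      Polynomial.funext fun z => by
        simp only [eval_mul, eval_sub, eval_one, eval_pow, eval_X, eval_C]
        linear_combination hB m z
    have h := congrArg (fun q => (derivative q).eval y) hBP
    simp only [derivative_mul, derivative_sub, derivative_one, derivative_pow, derivative_X,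
      derivative_C, eval_mul, eval_add, eval_sub, eval_one, eval_pow, eval_X, eval_C,
      zero_mul, mul_one, one_mul, zero_add, zero_sub, sub_zero, pow_one, eval_neg,
      show (2:ℕ)-1 = 1 from rfl, Nat.cast_ofNat] at h
    linear_combination h
  set cn : ℝ := ((ν+2 : ℕ):ℝ) with hcndef
  have hccast : cn = (ν:ℝ) + 2 := by rw [hcndef]; push_cast; ring
  have hODE : ∀ y : ℝ, (1-y^2) * (derivative (derivative (p (ν+2)))).eval y
      = (2*l+1)*y*(derivative (p (ν+2))).eval y - cn*(cn+2*l)*(p (ν+2)).eval y := by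
    have key : ∀ y : ℝ,
        (1-y^2) * (((1-X^2) * derivative (derivative (p (ν+2)))).eval y)
          = (1-y^2) * ((C (2*l+1) * X * derivative (p (ν+2))
              - C (cn*(cn+2*l)) * p (ν+2)).eval y) := by
      intro y
      have hBm := hB (ν+1) y
      have hBn := hB (ν+2) y
      have hRn := hrec (ν+2) (by omega) y
      have hRDn := hrecD (ν+2) (by omega) y
      have hDBn := hDB (ν+2) y
      simp only [Nat.add_sub_cancel, show ν+2+1 = ν+3 from rfl, show ν+1+1 = ν+2 from rfl]
        at hBm hBn hRn hRDn hDBn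
      push_cast at hBm hBn hRn hRDn hDBn ⊢
      simp only [eval_mul, eval_sub, eval_one, eval_pow, eval_X, eval_C, hccast]
      linear_combination ((ν:ℝ)+2) * hBm - ((ν:ℝ)+1+2*l)*y * hBn + ((ν:ℝ)+1+2*l)*y * hRn
        + (y^2-1) * hRDn + (1-y^2) * hDBn
    have key2 := cancel_eval key
    intro y
    have h := key2 y
    simp only [eval_mul, eval_sub, eval_one, eval_pow, eval_X, eval_C] at h
    linear_combination h
  have hstar : ∀ y : ℝ, cn*(cn+2*l) * φ.eval y
      = cn*(cn+2*l)*((p (ν+2)).eval y)^2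
        - 2*l*(y*((p (ν+2)).eval y * (derivative (p (ν+2))).eval y))
        + (1-y^2)*((derivative (p (ν+2))).eval y)^2 := by
    have key : ∀ y : ℝ,
        (1-y^2) * ((C (cn*(cn+2*l)) * φ).eval y)
          = (1-y^2) * ((C (cn*(cn+2*l)) * (p (ν+2))^2
              - C (2*l) * (X * (p (ν+2) * derivative (p (ν+2))))
              + (1-X^2) * (derivative (p (ν+2)))^2).eval y) := by
      intro y
      have hBn := hB (ν+2) y
      have hRn := hrec (ν+2) (by omega) y
      have hφy := hφ' y
      simp only [Nat.add_sub_cancel, show ν+2+1 = ν+3 from rfl] at hBn hRn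
      push_cast at hBn hRn ⊢
      simp only [eval_mul, eval_add, eval_sub, eval_one, eval_pow, eval_X, eval_C, hccast]
      linear_combination (((ν:ℝ)+2)*((ν:ℝ)+2+2*l)) * hφy
        + ((((ν:ℝ)+2)+2*l)*y*(p (ν+2)).eval y - (1-y^2)*(derivative (p (ν+2))).eval y
            - ((ν:ℝ)+2)*(p (ν+1)).eval y) * hBn
        - ((((ν:ℝ)+2)+2*l)*y*(p (ν+2)).eval y - (1-y^2)*(derivative (p (ν+2))).eval y) * hRn
    have key2 := cancel_eval key
    intro y
    have h := key2 y
    simp only [eval_mul, eval_add, eval_sub, eval_one, eval_pow, eval_X, eval_C] at h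
    linear_combination h
  have hstarP : C (cn*(cn+2*l)) * φ = C (cn*(cn+2*l)) * (p (ν+2))^2
      - C (2*l) * (X * (p (ν+2) * derivative (p (ν+2))))
      + (1-X^2) * (derivative (p (ν+2)))^2 :=
    Polynomial.funext fun y => by
      simp only [eval_mul, eval_add, eval_sub, eval_one, eval_pow, eval_X, eval_C]
      linear_combination hstar y
  have hdag : ∀ y : ℝ, cn*(cn+2*l) * (derivative φ).eval y
      = 2*l*(y*((derivative (p (ν+2))).eval y)^2
          - (p (ν+2)).eval y * (derivative (p (ν+2))).eval y
          - y*(p (ν+2)).eval y*(derivative (derivative (p (ν+2)))).eval y) := by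
    intro y
    have h := congrArg (fun q => (derivative q).eval y) hstarP
    simp only [derivative_mul, derivative_add, derivative_sub, derivative_one, derivative_pow,
      derivative_X, derivative_C, eval_mul, eval_add, eval_sub, eval_one, eval_pow, eval_X,
      eval_C, zero_mul, mul_one, one_mul, zero_add, zero_sub, sub_zero, pow_one, eval_neg,
      show (2:ℕ)-1 = 1 from rfl, Nat.cast_ofNat] at h
    linear_combination h + 2*(derivative (p (ν+2))).eval y * hODE y
  -- evaluation of factorization
  have hW1 : derivative (∏ k : Fin (ν+2), (X - C (x k)))
      = ∑ k : Fin (ν+2), ∏ j ∈ Finset.univ.erase k, (X - C (x j)) := by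
    rw [polyDerivProd]
    refine Finset.sum_congr rfl fun k _ => ?_
    rw [derivative_sub, derivative_X, derivative_C, sub_zero, mul_one]
  have hW2 : derivative (derivative (∏ k : Fin (ν+2), (X - C (x k))))
      = ∑ k : Fin (ν+2), ∑ j ∈ Finset.univ.erase k,
          ∏ i ∈ (Finset.univ.erase k).erase j, (X - C (x i)) := by
    rw [hW1, map_sum]
    refine Finset.sum_congr rfl fun k _ => ?_
    rw [polyDerivProd]
    refine Finset.sum_congr rfl fun j _ => ?_
    rw [derivative_sub, derivative_X, derivative_C, sub_zero, mul_one]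
  intro y hy
  set Pn : ℝ := (p (ν+2)).eval y with hPndef
  set Dn : ℝ := (derivative (p (ν+2))).eval y with hDndef
  set DDn : ℝ := (derivative (derivative (p (ν+2)))).eval y with hDDndef
  have hyk : ∀ k, y - x k ≠ 0 := by
    intro k h
    have : y = x k := by linarith [sub_eq_zero.mp h]
    exact hy k (by rw [this])
  have hyk' : ∀ k, y + x k ≠ 0 := by
    intro k h
    have : y = -(x k) := by linarith
    exact hy k (by rw [this]; ring)
  have hPn : Pn = (∏ k : Fin (ν+2), (y - x k)) * c := by
    rw [hPndef, hq, eval_mul, eval_C, eval_prod]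
    simp only [eval_sub, eval_X, eval_C]
  have hDn : Dn = (∑ k : Fin (ν+2), ∏ j ∈ Finset.univ.erase k, (y - x j)) * c := by
    rw [hDndef, hq, derivative_mul, derivative_C, mul_zero, add_zero, eval_mul, eval_C, hW1,
      eval_finset_sum]
    simp only [eval_prod, eval_sub, eval_X, eval_C]
  have hDDn : DDn = (∑ k : Fin (ν+2), ∑ j ∈ Finset.univ.erase k,
      ∏ i ∈ (Finset.univ.erase k).erase j, (y - x i)) * c := by
    rw [hDDndef, hq, derivative_mul, derivative_C, mul_zero, add_zero, derivative_mul,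
      derivative_C, mul_zero, add_zero, eval_mul, eval_C, hW2, eval_finset_sum]
    simp only [eval_finset_sum, eval_prod, eval_sub, eval_X, eval_C]
  have hkeyF : ∀ k, (∏ j : Fin (ν+2), (y - x j))
      = (y - x k) * ∏ j ∈ Finset.univ.erase k, (y - x j) :=
    fun k => (Finset.mul_prod_erase _ _ (Finset.mem_univ k)).symm
  have hkey2 : ∀ k : Fin (ν+2), ∀ j ∈ Finset.univ.erase k,
      (∏ i : Fin (ν+2), (y - x i)) * ∏ i ∈ (Finset.univ.erase k).erase j, (y - x i)
        = (∏ i ∈ Finset.univ.erase k, (y - x i)) * ∏ i ∈ Finset.univ.erase j, (y - x i) := by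
    intro k j hj
    have hjk : j ≠ k := Finset.ne_of_mem_erase hj
    have h1 : (∏ i ∈ Finset.univ.erase j, (y - x i))
        = (y - x k) * ∏ i ∈ (Finset.univ.erase j).erase k, (y - x i) :=
      (Finset.mul_prod_erase _ _ (Finset.mem_erase.mpr ⟨hjk.symm, Finset.mem_univ k⟩)).symm
    rw [hkeyF k, h1, Finset.erase_right_comm]
    ring
  have hA : Dn^2 - Pn * DDn
      = c^2 * ∑ k : Fin (ν+2), (∏ j ∈ Finset.univ.erase k, (y - x j))
          * ∏ j ∈ Finset.univ.erase k, (y - x j) := by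
    have hsum1 : (∑ k : Fin (ν+2), ∏ j ∈ Finset.univ.erase k, (y - x j))
        * (∑ k : Fin (ν+2), ∏ j ∈ Finset.univ.erase k, (y - x j))
        = ∑ k : Fin (ν+2), ((∏ j ∈ Finset.univ.erase k, (y - x j))
            * ∏ j ∈ Finset.univ.erase k, (y - x j)
          + ∑ j ∈ Finset.univ.erase k, (∏ i ∈ Finset.univ.erase k, (y - x i))
              * ∏ i ∈ Finset.univ.erase j, (y - x i)) := by
      rw [Finset.sum_mul_sum]
      exact Finset.sum_congr rfl fun k _ =>
        (Finset.add_sum_erase _ (fun j => (∏ i ∈ Finset.univ.erase k, (y - x i))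
            * ∏ i ∈ Finset.univ.erase j, (y - x i)) (Finset.mem_univ k)).symm
    have hsum2 : (∏ i : Fin (ν+2), (y - x i)) * (∑ k : Fin (ν+2), ∑ j ∈ Finset.univ.erase k,
        ∏ i ∈ (Finset.univ.erase k).erase j, (y - x i))
        = ∑ k : Fin (ν+2), ∑ j ∈ Finset.univ.erase k,
            (∏ i ∈ Finset.univ.erase k, (y - x i)) * ∏ i ∈ Finset.univ.erase j, (y - x i) := by
      rw [Finset.mul_sum]
      refine Finset.sum_congr rfl fun k _ => ?_
      rw [Finset.mul_sum]
      exact Finset.sum_congr rfl fun j hj => hkey2 k j hj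
    have hsum3 := Finset.sum_add_distrib (s := (Finset.univ : Finset (Fin (ν+2))))
      (f := fun k => (∏ j ∈ Finset.univ.erase k, (y - x j))
          * ∏ j ∈ Finset.univ.erase k, (y - x j))
      (g := fun k => ∑ j ∈ Finset.univ.erase k, (∏ i ∈ Finset.univ.erase k, (y - x i))
          * ∏ i ∈ Finset.univ.erase j, (y - x i))
    rw [hDn, hPn, hDDn]
    linear_combination c^2 * hsum1 + c^2 * hsum3 - c^2 * hsum2
  have hAsum : ∑ k : Fin (ν+2), Pn^2/(y - x k)^2 = Dn^2 - Pn*DDn := by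
    rw [hA, Finset.mul_sum]
    refine Finset.sum_congr rfl fun k _ => ?_
    rw [hPn, hkeyF k]
    field_simp [hyk k]
  have hCsum : ∑ k : Fin (ν+2), Pn^2/(y - x k) = Pn * Dn := by
    have h1 : ∀ k ∈ (Finset.univ : Finset (Fin (ν+2))),
        Pn^2/(y - x k) = Pn * (c * ∏ j ∈ Finset.univ.erase k, (y - x j)) := by
      intro k _
      rw [hPn, hkeyF k]
      field_simp [hyk k]
    rw [Finset.sum_congr rfl h1, ← Finset.mul_sum, ← Finset.mul_sum, hDn]
    ring
  have hBsum : ∑ k : Fin (ν+2), Pn^2/(y + x k)^2 = ∑ k : Fin (ν+2), Pn^2/(y - x k)^2 := by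
    rw [← Equiv.sum_comp e (fun k => Pn^2/(y - x k)^2)]
    exact Finset.sum_congr rfl fun k _ => by rw [he k, sub_neg_eq_add]
  have hDsum : ∑ k : Fin (ν+2), Pn^2/(y + x k) = Pn * Dn := by
    rw [← hCsum, ← Equiv.sum_comp e (fun k => Pn^2/(y - x k))]
    exact Finset.sum_congr rfl fun k _ => by rw [he k, sub_neg_eq_add]
  have hyS : y * (∑ k : Fin (ν+2), (x k)^2 * Pn^2 / (y^2 - (x k)^2)^2)
      = ∑ k : Fin (ν+2), ((y/4) * (Pn^2/(y - x k)^2) + (y/4)*(Pn^2/(y + x k)^2)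
          - (1/4)*(Pn^2/(y - x k)) - (1/4)*(Pn^2/(y + x k))) := by
    rw [Finset.mul_sum]
    exact Finset.sum_congr rfl fun k _ => scalar_decomp y (x k) Pn (hyk k) (hyk' k)
  have hyS2 : y * (∑ k : Fin (ν+2), (x k)^2 * Pn^2 / (y^2 - (x k)^2)^2)
      = (y/2) * (Dn^2 - Pn*DDn) - (1/2)*(Pn*Dn) := by
    rw [hyS]
    rw [Finset.sum_sub_distrib, Finset.sum_sub_distrib, Finset.sum_add_distrib,
      ← Finset.mul_sum, ← Finset.mul_sum, ← Finset.mul_sum, ← Finset.mul_sum,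
      hAsum, hBsum, hAsum, hCsum, hDsum]
    ring
  have hNpos : (0:ℝ) < cn*(cn+2*l) := by
    have h0 := hcast ν
    have h1 : (0:ℝ) < (ν:ℝ)+2 := by linarith
    have h2 : (0:ℝ) < (ν:ℝ)+2+2*l := by linarith
    rw [hccast]
    exact mul_pos h1 h2
  rw [div_mul_eq_mul_div, eq_div_iff (ne_of_gt hNpos)]
  linear_combination hdag y - 4*l*hyS2
end

section
/- Let λ > −1/2 and let n ≥ 1 be an integer. Define ψ_n(x) = x (p_n^{(λ)′}(x))² − p_n^{(λ)}(x) p_n^{(λ)′}(x) − x p_n^{(λ)}(x) p_n^{(λ)″}(x). Then for all real x, n(n + 2λ)(1 − x²) ψ_n′(x) = (2λ+1)(n−1)(n+2λ+1) x² (p_n^{(λ)′}(x))² − (2λ+1) x (1 + 2(λ+1)x²) p_n^{(λ)′}(x) p_n^{(λ)″}(x) + (1 − x²)(2 + (2λ+1)x²)(p_n^{(λ)″}(x))². -/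
open Polynomial

/-- For `l > -1/2` and `n ≥ 1`, with `ψ(x) = x pₙ′(x)² - pₙ(x) pₙ′(x) - x pₙ(x) pₙ″(x)`:
`n(n+2l)(1-x²) ψ′(x) = (2l+1)(n-1)(n+2l+1) x² pₙ′(x)²
  - (2l+1) x (1 + 2(l+1)x²) pₙ′(x) pₙ″(x) + (1-x²)(2 + (2l+1)x²) pₙ″(x)²`. -/
theorem turan_psi_derivative_quadratic_form
    (l : ℝ) (hl : -(1/2 : ℝ) < l) (n : ℕ) (hn : 1 ≤ n)
    (p : ℕ → Polynomial ℝ)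
    (hp0 : p 0 = 1) (hp1 : p 1 = Polynomial.X)
    (hrec : ∀ m : ℕ, 1 ≤ m → ∀ x : ℝ,
      ((m : ℝ) + 2 * l) * (p (m + 1)).eval x
        = 2 * ((m : ℝ) + l) * x * (p m).eval x - (m : ℝ) * (p (m - 1)).eval x)
    (ψ : Polynomial ℝ)
    (hψ : ∀ x : ℝ, ψ.eval x
        = x * ((Polynomial.derivative (p n)).eval x) ^ 2
          - (p n).eval x * (Polynomial.derivative (p n)).eval x
          - x * (p n).eval x
              * (Polynomial.derivative (Polynomial.derivative (p n))).eval x) :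
    ∀ x : ℝ,
      (n : ℝ) * ((n : ℝ) + 2 * l) * (1 - x ^ 2) * (Polynomial.derivative ψ).eval x
        = (2 * l + 1) * ((n : ℝ) - 1) * ((n : ℝ) + 2 * l + 1) * x ^ 2
              * ((Polynomial.derivative (p n)).eval x) ^ 2
          - (2 * l + 1) * x * (1 + 2 * (l + 1) * x ^ 2)
              * (Polynomial.derivative (p n)).eval x
              * (Polynomial.derivative (Polynomial.derivative (p n))).eval x
          + (1 - x ^ 2) * (2 + (2 * l + 1) * x ^ 2)
              * ((Polynomial.derivative (Polynomial.derivative (p n))).eval x) ^ 2 := by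
  -- recurrence as a polynomial identity
  have prec : ∀ m : ℕ, 1 ≤ m →
      C ((m : ℝ) + 2 * l) * p (m + 1)
        = C (2 * ((m : ℝ) + l)) * (X * p m) - C (m : ℝ) * p (m - 1) := by
    intro m hm
    apply Polynomial.funext
    intro x
    simp only [eval_mul, eval_sub, eval_C, eval_X]
    rw [hrec m hm x]; ring
  have hlne : ∀ m : ℕ, 1 ≤ m → ((m : ℝ) + 2 * l) ≠ 0 := by
    intro m hm
    have h1 : (1 : ℝ) ≤ (m : ℝ) := by exact_mod_cast hm
    nlinarith
  -- key induction: derivative relation E and the ODE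
  have key : ∀ m : ℕ, 1 ≤ m →
      ((1 - X ^ 2) * derivative (p m) = C ((m : ℝ) + 2 * l) * (X * p m - p (m + 1)))
      ∧ ((1 - X ^ 2) * derivative (derivative (p m))
          = C (2 * l + 1) * (X * derivative (p m))
            - C ((m : ℝ) * ((m : ℝ) + 2 * l)) * p m) := by
    intro m hm
    induction m, hm using Nat.le_induction with
    | base =>
      have h1 := prec 1 le_rfl
      rw [hp0, hp1] at h1
      norm_num at h1
      constructor
      · rw [hp1]
        simp only [Nat.cast_one, derivative_X]
        linear_combination (norm := (simp only [map_add, map_mul, map_one, map_ofNat,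
          map_natCast, Nat.cast_ofNat, Nat.cast_one]; ring1)) h1
      · rw [hp1]
        simp only [Nat.cast_one, derivative_X, derivative_one]
        simp only [map_add, map_mul, map_one, map_ofNat, map_natCast, Nat.cast_ofNat,
          Nat.cast_one]
        ring
    | succ m hm ih =>
      obtain ⟨hE, hODE⟩ := ih
      have hane : ((m : ℝ) + 2 * l) ≠ 0 := hlne m hm
      -- derivative of hE
      have hdE := congrArg derivative hE
      simp only [derivative_mul, derivative_sub, derivative_one, derivative_X_pow,
        derivative_X, derivative_C, derivative_C_mul] at hdE
      -- the relation F : C a * (p (m+1))' = C (a*(m+1)) * p m + C (m+1) * X * (p m)'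
      have hF : C ((m : ℝ) + 2 * l) * derivative (p (m + 1))
          = C (((m : ℝ) + 2 * l) * ((m : ℝ) + 1)) * p m
            + C ((m : ℝ) + 1) * (X * derivative (p m)) := by
        linear_combination (norm := (simp only [map_add, map_mul, map_one, map_ofNat,
          map_natCast, Nat.cast_ofNat, Nat.cast_one]; ring1)) hdE - hODE
      -- E at m+1, multiplied by C a
      have hE1 : C ((m : ℝ) + 2 * l) * ((1 - X ^ 2) * derivative (p (m + 1)))
          = C ((m : ℝ) + 2 * l) * (C ((m : ℝ) + 1) * (p m - X * p (m + 1))) := by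
        linear_combination (norm := (simp only [map_add, map_mul, map_one, map_ofNat,
          map_natCast, Nat.cast_ofNat, Nat.cast_one]; ring1))
          (1 - X ^ 2) * hF + (C ((m : ℝ) + 1) * X) * hE
      have hE1' : (1 - X ^ 2) * derivative (p (m + 1))
          = C ((m : ℝ) + 1) * (p m - X * p (m + 1)) :=
        mul_left_cancel₀ ((Polynomial.C_ne_zero (a := (m : ℝ) + 2 * l)).mpr hane) hE1
      -- recurrence at m+1
      have h2 := prec (m + 1) (by omega)
      rw [Nat.add_sub_cancel] at h2
      constructor
      · linear_combination (norm := (push_cast; simp only [map_add, map_mul, map_one,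
          map_ofNat, map_natCast, Nat.cast_ofNat, Nat.cast_one]; push_cast; ring1))
          hE1' + h2
      · -- ODE at m+1
        have hF' := congrArg derivative hF
        simp only [derivative_mul, derivative_add, derivative_C_mul, derivative_X,
          derivative_C] at hF'
        have hODE1 : C ((m : ℝ) + 2 * l) * ((1 - X ^ 2) * derivative (derivative (p (m + 1))))
            = C ((m : ℝ) + 2 * l) * (C (2 * l + 1) * (X * derivative (p (m + 1)))
                - C ((((m : ℝ)) + 1) * ((((m : ℝ)) + 1) + 2 * l)) * p (m + 1)) := by
          linear_combination (norm := (simp only [map_add, map_mul, map_one, map_ofNat,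
            map_natCast, Nat.cast_ofNat, Nat.cast_one]; ring1))
            (1 - X ^ 2) * hF' + (C ((m : ℝ) + 1) * X) * hODE
            - (C (2 * l + 1) * X) * hF
            + (C ((m : ℝ) + 1) * C (((m : ℝ) + 1) + 2 * l)) * hE
        have h3 := mul_left_cancel₀ ((Polynomial.C_ne_zero (a := (m : ℝ) + 2 * l)).mpr hane) hODE1
        linear_combination (norm := (push_cast; simp only [map_add, map_mul, map_one,
          map_ofNat, map_natCast, Nat.cast_ofNat, Nat.cast_one]; push_cast; ring1)) h3
  obtain ⟨hE, hODE⟩ := key n hn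
  -- ψ as a polynomial
  have hψp : ψ = X * (derivative (p n)) ^ 2 - p n * derivative (p n)
      - X * (p n * derivative (derivative (p n))) := by
    apply Polynomial.funext
    intro x
    rw [hψ x]
    simp only [eval_mul, eval_sub, eval_X, eval_pow]
    ring
  intro x
  -- ODE evaluated at x
  have hO := congrArg (eval x) hODE
  simp only [eval_mul, eval_sub, eval_add, eval_C, eval_X, eval_pow, eval_one] at hO
  -- derivative of the ODE evaluated at x
  have hdODE := congrArg derivative hODE
  simp only [derivative_mul, derivative_sub, derivative_add, derivative_one,
    derivative_X_pow, derivative_X, derivative_C, derivative_C_mul] at hdODE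
  have hO' := congrArg (eval x) hdODE
  simp only [eval_mul, eval_sub, eval_add, eval_C, eval_X, eval_pow, eval_one,
    eval_natCast, eval_zero] at hO'
  -- compute the derivative of ψ
  rw [hψp]
  simp only [derivative_mul, derivative_sub, derivative_X, derivative_pow,
    eval_mul, eval_sub, eval_add, eval_X, eval_pow, eval_one, eval_natCast, eval_C]
  linear_combination (norm := (push_cast; ring1))
    (-(((n : ℝ) * ((n : ℝ) + 2 * l)) * x * (p n).eval x)) * hO'
    + (((n : ℝ) * ((n : ℝ) + 2 * l)) * x * (derivative (p n)).eval x
        - (2 * l + 1) * x * (derivative (p n)).eval x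
        - (2 + (2 * l + 1) * x ^ 2) * (derivative (derivative (p n))).eval x) * hO
end

section
/- Let λ > −1/2 be a real number and let n ≥ 2 be an integer. Then ((n + λ)² − (λ + 1)²) / ((n + λ)² + 3λ + 5/4 + 3(λ + 1/2)²/(n − 1)) ≤ 1 − (2λ + 1)(2λ + 3)/(4(n + λ)² − λ − 3/2). -/
/-- For `l > -1/2` and integer `n ≥ 2`:
`((n+l)² - (l+1)²) / ((n+l)² + 3l + 5/4 + 3(l+1/2)²/(n-1))
  ≤ 1 - (2l+1)(2l+3)/(4(n+l)² - l - 3/2)`. -/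
theorem turan_zero_bound_comparison
    (l : ℝ) (hl : -(1/2 : ℝ) < l) (n : ℕ) (hn : 2 ≤ n) :
    (((n : ℝ) + l) ^ 2 - (l + 1) ^ 2)
        / (((n : ℝ) + l) ^ 2 + 3 * l + 5 / 4 + 3 * (l + 1 / 2) ^ 2 / ((n : ℝ) - 1))
      ≤ 1 - (2 * l + 1) * (2 * l + 3) / (4 * ((n : ℝ) + l) ^ 2 - l - 3 / 2) := by
  have hx : (2 : ℝ) ≤ (n : ℝ) := by exact_mod_cast hn
  set x : ℝ := (n : ℝ) with hxdef
  have hm0 : (0 : ℝ) < x - 1 := by linarith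
  have hxl : (3/2 : ℝ) < x + l := by linarith
  have hD2 : (0 : ℝ) < 4 * (x + l) ^ 2 - l - 3 / 2 := by nlinarith
  have hD1 : (0 : ℝ) < (x + l) ^ 2 + 3 * l + 5 / 4 + 3 * (l + 1 / 2) ^ 2 / (x - 1) := by
    have h3 : (0:ℝ) ≤ 3 * (l + 1 / 2) ^ 2 / (x - 1) := by positivity
    nlinarith
  have hrhs : 1 - (2 * l + 1) * (2 * l + 3) / (4 * (x + l) ^ 2 - l - 3 / 2)
      = ((4 * (x + l) ^ 2 - l - 3 / 2) - (2 * l + 1) * (2 * l + 3))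
        / (4 * (x + l) ^ 2 - l - 3 / 2) := by
    rw [sub_div, div_self (ne_of_gt hD2)]
  rw [hrhs, div_le_div_iff₀ hD1 hD2]
  have expand : (x + l) ^ 2 + 3 * l + 5 / 4 + 3 * (l + 1 / 2) ^ 2 / (x - 1)
      = (((x + l) ^ 2 + 3 * l + 5 / 4) * (x - 1) + 3 * (l + 1 / 2) ^ 2) / (x - 1) := by
    field_simp
  rw [expand, ← mul_div_assoc, le_div_iff₀ hm0]
  have hm : (0 : ℝ) ≤ x - 2 := by linarith
  have ht : (0 : ℝ) ≤ l + 1/2 := by linarith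
  nlinarith [mul_nonneg hm ht, mul_nonneg (mul_nonneg hm hm) ht,
    mul_nonneg hm (mul_nonneg ht ht), mul_nonneg (mul_nonneg (mul_nonneg hm hm) hm) ht,
    mul_nonneg (mul_nonneg hm hm) (mul_nonneg ht ht),
    mul_nonneg hm (mul_nonneg (mul_nonneg ht ht) ht),
    mul_nonneg ht (mul_nonneg ht ht), mul_nonneg ht ht]
end

section
/- Let λ > −1/2 and let n ≥ 1 be an integer. Then the normalized Turán function satisfies φ_{n,λ}(1) = 1/(2λ + 1); equivalently, the derivative of the Turán determinant satisfies Δ_{n,λ}′(1) = −2/(2λ + 1). -/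
/-!
At `x = 1` the recurrence gives `pₘ(1) = 1` and, differentiated once,
`pₘ'(1) = m (m + 2λ) / (2λ + 1)`. Hence
`Δ'(1) = (2n(n+2λ) - (n-1)(n-1+2λ) - (n+1)(n+1+2λ)) / (2λ+1) = -2 / (2λ+1)`,
and differentiating `(1 - x²) φ = Δ` at `x = 1` gives `-2 φ(1) = Δ'(1)`.
-/

open Polynomial

theorem derivative_one_sub_X_sq_mul_eval_one {R : Type*} [CommRing R] (φ : R[X]) :
    (derivative ((1 - X ^ 2) * φ)).eval 1 = -2 * φ.eval 1 := by
  simp only [derivative_mul, derivative_sub, derivative_one, derivative_X_pow, eval_add,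
    eval_mul, eval_sub, eval_one, eval_pow, eval_X, eval_C]
  norm_num

/-- The recurrence is indexed from `p 2` on, so that no truncated `m - 1` occurs. -/
structure IsNormalizedGegenbauer (l : ℝ) (p : ℕ → ℝ[X]) : Prop where
  zero : p 0 = 1
  one : p 1 = X
  succ_succ : ∀ m : ℕ, C ((m : ℝ) + 1 + 2 * l) * p (m + 2)
    = C (2 * ((m : ℝ) + 1 + l)) * X * p (m + 1) - C ((m : ℝ) + 1) * p m

namespace IsNormalizedGegenbauer

variable {l : ℝ} {p : ℕ → ℝ[X]}

theorem of_eval (hp0 : p 0 = 1) (hp1 : p 1 = X)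
    (hrec : ∀ m : ℕ, 1 ≤ m → ∀ x : ℝ,
      ((m : ℝ) + 2 * l) * (p (m + 1)).eval x
        = 2 * ((m : ℝ) + l) * x * (p m).eval x - (m : ℝ) * (p (m - 1)).eval x) :
    IsNormalizedGegenbauer l p where
  zero := hp0
  one := hp1
  succ_succ m := Polynomial.funext fun x => by
    simpa [add_assoc] using hrec (m + 1) (by omega) x

theorem coeff_ne_zero (hl : -(1 / 2 : ℝ) < l) (m : ℕ) : (m : ℝ) + 1 + 2 * l ≠ 0 := by
  have : (0 : ℝ) ≤ m := m.cast_nonneg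
  linarith

theorem eval_one (hp : IsNormalizedGegenbauer l p) (hl : -(1 / 2 : ℝ) < l) (m : ℕ) :
    (p m).eval 1 = 1 := by
  induction m using Nat.twoStepInduction with
  | zero => simp [hp.zero]
  | one => simp [hp.one]
  | more m h0 h1 =>
    have h := congrArg (eval 1) (hp.succ_succ m)
    simp only [eval_mul, eval_sub, eval_C, eval_X, h0, h1] at h
    exact mul_left_cancel₀ (coeff_ne_zero hl m) (by rw [h]; ring)

theorem derivative_eval_one (hp : IsNormalizedGegenbauer l p) (hl : -(1 / 2 : ℝ) < l) (m : ℕ) :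
    (derivative (p m)).eval 1 = m * (m + 2 * l) / (2 * l + 1) := by
  have h2l : 2 * l + 1 ≠ 0 := by linarith
  induction m using Nat.twoStepInduction with
  | zero => simp [hp.zero]
  | one =>
    simp only [hp.one, derivative_X, Polynomial.eval_one, Nat.cast_one]
    field_simp
    ring
  | more m h0 h1 =>
    have h := congrArg (fun q => (derivative q).eval 1) (hp.succ_succ m)
    simp only [derivative_mul, derivative_C, derivative_sub, derivative_X, eval_mul, eval_sub,
      eval_add, eval_C, eval_X, zero_mul, zero_add, mul_one, hp.eval_one hl, h0, h1] at h
    refine mul_left_cancel₀ (coeff_ne_zero hl m) ?_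
    rw [h]
    push_cast
    field_simp
    ring

theorem turan_derivative_eval_one (hp : IsNormalizedGegenbauer l p) (hl : -(1 / 2 : ℝ) < l)
    (k : ℕ) :
    (derivative (p (k + 1) ^ 2 - p k * p (k + 2))).eval 1 = -2 / (2 * l + 1) := by
  have h2l : 2 * l + 1 ≠ 0 := by linarith
  simp only [derivative_sub, derivative_pow, derivative_mul, eval_sub, eval_add, eval_mul,
    eval_pow, eval_C, hp.eval_one hl, hp.derivative_eval_one hl]
  push_cast
  field_simp
  ring

end IsNormalizedGegenbauer

/-- For `l > -1/2` and `n ≥ 1`, the normalized Turán function satisfies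
`φ(1) = 1/(2l+1)`; equivalently, the Turán determinant `Δ = pₙ² - p_{n-1} p_{n+1}`
satisfies `Δ′(1) = -2/(2l+1)`. -/
theorem turan_normalized_value_at_one
    (l : ℝ) (hl : -(1/2 : ℝ) < l) (n : ℕ) (hn : 1 ≤ n)
    (p : ℕ → Polynomial ℝ)
    (hp0 : p 0 = 1) (hp1 : p 1 = Polynomial.X)
    (hrec : ∀ m : ℕ, 1 ≤ m → ∀ x : ℝ,
      ((m : ℝ) + 2 * l) * (p (m + 1)).eval x
        = 2 * ((m : ℝ) + l) * x * (p m).eval x - (m : ℝ) * (p (m - 1)).eval x)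
    (φ : Polynomial ℝ)
    (hφ : ∀ x : ℝ, (1 - x ^ 2) * φ.eval x
        = ((p n).eval x) ^ 2 - (p (n - 1)).eval x * (p (n + 1)).eval x) :
    φ.eval 1 = 1 / (2 * l + 1) ∧
      (Polynomial.derivative ((p n) ^ 2 - p (n - 1) * p (n + 1))).eval 1
        = -2 / (2 * l + 1) := by
  have hp := IsNormalizedGegenbauer.of_eval hp0 hp1 hrec
  obtain ⟨k, rfl⟩ : ∃ k, n = k + 1 := ⟨n - 1, by omega⟩
  have hΔ := hp.turan_derivative_eval_one hl k
  have hφΔ : (1 - X ^ 2) * φ = p (k + 1) ^ 2 - p k * p (k + 2) :=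
    Polynomial.funext fun x => by simpa using hφ x
  refine ⟨?_, hΔ⟩
  have h := derivative_one_sub_X_sq_mul_eval_one φ
  rw [hφΔ, hΔ] at h
  have h2l : 2 * l + 1 ≠ 0 := by linarith
  field_simp at h ⊢
  linarith
end
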